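/- arXiv:1203.4915 — 8 statements merged into one kernel-verified Lean document; each statement's English description precedes it below -/
import Mathlib

section
/- Let E be a real normed space and ξ : E → ℝ a convex Katětov function. Define N^ξ : E × ℝ → ℝ by N^ξ(a, α) = |α|·ξ(a/α) if α ≠ 0 and N^ξ(a, 0) = ‖a‖ (the pair (a, α) encodes the vector αx − a of E ⊕ ℝx, so that (a,α)+(b,β)=(a+b,α+β) and t·(a,α)=(ta,tα)). Then N^ξ is a seminorm on E × ℝ, i.e. N^ξ(t·v) = |t|·N^ξ(v) and N^ξ(v + w) ≤ N^ξ(v) + N^ξ(w) for all v, w ∈ E × ℝ and t ∈ ℝ, and its restriction to E × {0} is the norm of E. -/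
/-- A function `ξ` on a metric space is *Katětov* if `|ξ x - ξ y| ≤ d(x,y)` and
`d(x,y) ≤ ξ x + ξ y` for all `x, y`. -/
def IsKatetov {X : Type*} [MetricSpace X] (ξ : X → ℝ) : Prop :=
  ∀ x y : X, |ξ x - ξ y| ≤ dist x y ∧ dist x y ≤ ξ x + ξ y

/-- The function `N^ξ` on `E × ℝ`, where `(a, α)` encodes the vector `αx - a` of `E ⊕ ℝx`:
`N^ξ (a, α) = |α| ξ(a/α)` for `α ≠ 0`, and `N^ξ (a, 0) = ‖a‖`. -/
noncomputable def katetovSeminorm {E : Type*} [NormedAddCommGroup E] [NormedSpace ℝ E]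
    (ξ : E → ℝ) (v : E × ℝ) : ℝ :=
  if v.2 = 0 then ‖v.1‖ else |v.2| * ξ (v.2⁻¹ • v.1)

/-!
Off `E × {0}`, `N^ξ` is the perspective `(a, α) ↦ α ξ(a/α)` of `ξ`, so for second coordinates
of the same sign subadditivity is the convexity of `ξ`. Adding a vector of `E × {0}` costs at most
its norm because `ξ` is 1-Lipschitz, and for opposite second coordinates `α, -α` the Katětov bound
`‖x - y‖ ≤ ξ x + ξ y` gives `‖a + b‖ ≤ N(a, α) + N(b, -α)`. Second coordinates `α, β` of opposite
signs with `|β| ≤ |α|` reduce to these two cases: with `s = -β/α ∈ [0, 1]`, write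
`v + w = (1 - s) • v + (s • v + w)`, where `s • v + w ∈ E × {0}` and
`N((1 - s) • v) + N(s • v) = N(v)`.
-/

namespace IsKatetov

variable {X : Type*} [MetricSpace X] {ξ : X → ℝ}

theorem lipschitzWith (hK : IsKatetov ξ) : LipschitzWith 1 ξ :=
  LipschitzWith.of_le_add fun x y => sub_le_iff_le_add'.1 (abs_sub_le_iff.1 (hK x y).1).1

theorem dist_le_add (hK : IsKatetov ξ) (x y : X) : dist x y ≤ ξ x + ξ y :=
  (hK x y).2

end IsKatetov

theorem ConvexOn.mul_apply_inv_smul_add_le {E : Type*} [AddCommGroup E] [Module ℝ E]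
    {s : Set E} {ξ : E → ℝ} (hC : ConvexOn ℝ s ξ) {α β : ℝ} (hα : 0 < α) (hβ : 0 < β)
    {a b : E} (ha : α⁻¹ • a ∈ s) (hb : β⁻¹ • b ∈ s) :
    (α + β) * ξ ((α + β)⁻¹ • (a + b)) ≤ α * ξ (α⁻¹ • a) + β * ξ (β⁻¹ • b) := by
  have hγ : 0 < α + β := add_pos hα hβ
  have hcomb : (α / (α + β)) • (α⁻¹ • a) + (β / (α + β)) • (β⁻¹ • b) = (α + β)⁻¹ • (a + b) := by
    match_scalars <;> field_simp
  have h := hC.2 ha hb (div_pos hα hγ).le (div_pos hβ hγ).le (by field_simp)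
  rw [hcomb, smul_eq_mul, smul_eq_mul] at h
  calc (α + β) * ξ ((α + β)⁻¹ • (a + b))
      ≤ (α + β) * (α / (α + β) * ξ (α⁻¹ • a) + β / (α + β) * ξ (β⁻¹ • b)) := by gcongr
    _ = α * ξ (α⁻¹ • a) + β * ξ (β⁻¹ • b) := by field_simp

namespace katetovSeminorm

variable {E : Type*} [NormedAddCommGroup E] [NormedSpace ℝ E] {ξ : E → ℝ}

@[simp]
theorem mk_zero (ξ : E → ℝ) (a : E) : katetovSeminorm ξ (a, 0) = ‖a‖ := by
  simp [katetovSeminorm]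

theorem smul (ξ : E → ℝ) (t : ℝ) (v : E × ℝ) :
    katetovSeminorm ξ (t • v) = |t| * katetovSeminorm ξ v := by
  obtain ⟨a, α⟩ := v
  rcases eq_or_ne t 0 with rfl | ht
  · simp [katetovSeminorm]
  rcases eq_or_ne α 0 with rfl | hα
  · simp [norm_smul]
  have hcancel : (t * α)⁻¹ • t • a = α⁻¹ • a := by
    rw [smul_smul, mul_inv_rev, inv_mul_cancel_right₀ ht]
  simp only [katetovSeminorm, Prod.smul_mk, smul_eq_mul, mul_eq_zero, ht, hα, or_self,
    if_false, hcancel, abs_mul]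
  ring

theorem neg (ξ : E → ℝ) (v : E × ℝ) : katetovSeminorm ξ (-v) = katetovSeminorm ξ v := by
  simpa using smul ξ (-1) v

theorem add_mk_zero_le (hξ : LipschitzWith 1 ξ) (v : E × ℝ) (b : E) :
    katetovSeminorm ξ (v + (b, 0)) ≤ katetovSeminorm ξ v + ‖b‖ := by
  obtain ⟨a, α⟩ := v
  rcases eq_or_ne α 0 with rfl | hα
  · simpa using norm_add_le a b
  simp only [katetovSeminorm, Prod.mk_add_mk, add_zero, hα, if_false]
  have hlip := hξ.le_add_mul (α⁻¹ • (a + b)) (α⁻¹ • a)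
  rw [dist_eq_norm, smul_add, add_sub_cancel_left, norm_smul, norm_inv, Real.norm_eq_abs,
    NNReal.coe_one, one_mul] at hlip
  calc |α| * ξ (α⁻¹ • (a + b)) ≤ |α| * (ξ (α⁻¹ • a) + |α|⁻¹ * ‖b‖) := by
        rw [smul_add]; gcongr
    _ = |α| * ξ (α⁻¹ • a) + ‖b‖ := by field_simp

theorem norm_add_le_add_mk_neg (hK : IsKatetov ξ) (a b : E) (α : ℝ) :
    ‖a + b‖ ≤ katetovSeminorm ξ (a, α) + katetovSeminorm ξ (b, -α) := by
  rcases eq_or_ne α 0 with rfl | hα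
  · simpa using norm_add_le a b
  simp only [katetovSeminorm, hα, neg_eq_zero, if_false, abs_neg]
  have hdist := hK.dist_le_add (α⁻¹ • a) ((-α)⁻¹ • b)
  have hnorm : dist (α⁻¹ • a) ((-α)⁻¹ • b) = |α|⁻¹ * ‖a + b‖ := by
    rw [dist_eq_norm, inv_neg, neg_smul, sub_neg_eq_add, ← smul_add, norm_smul, norm_inv,
      Real.norm_eq_abs]
  calc ‖a + b‖ = |α| * (|α|⁻¹ * ‖a + b‖) := by field_simp
    _ ≤ |α| * (ξ (α⁻¹ • a) + ξ ((-α)⁻¹ • b)) := by rw [← hnorm]; gcongr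
    _ = _ := by ring

theorem add_le_of_pos (hC : ConvexOn ℝ Set.univ ξ) {v w : E × ℝ} (hv : 0 < v.2) (hw : 0 < w.2) :
    katetovSeminorm ξ (v + w) ≤ katetovSeminorm ξ v + katetovSeminorm ξ w := by
  simp only [katetovSeminorm, Prod.fst_add, Prod.snd_add, (add_pos hv hw).ne', hv.ne', hw.ne',
    if_false, abs_of_pos hv, abs_of_pos hw, abs_of_pos (add_pos hv hw)]
  exact hC.mul_apply_inv_smul_add_le hv hw (Set.mem_univ _) (Set.mem_univ _)

theorem add_le_of_snd_eq_neg_mul (hK : IsKatetov ξ) {s : ℝ} (hs₀ : 0 ≤ s) (hs₁ : s ≤ 1)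
    {v w : E × ℝ} (hw : w.2 = -(s * v.2)) :
    katetovSeminorm ξ (v + w) ≤ katetovSeminorm ξ v + katetovSeminorm ξ w := by
  have hsplit : v + w = (1 - s) • v + (s • v.1 + w.1, 0) := by
    ext
    · simp only [Prod.fst_add, Prod.smul_fst]
      module
    · simp only [Prod.snd_add, Prod.smul_snd, smul_eq_mul, hw]
      ring
  calc katetovSeminorm ξ (v + w)
      ≤ katetovSeminorm ξ ((1 - s) • v) + ‖s • v.1 + w.1‖ :=
        hsplit ▸ add_mk_zero_le hK.lipschitzWith _ _
    _ ≤ katetovSeminorm ξ ((1 - s) • v) + (katetovSeminorm ξ (s • v) + katetovSeminorm ξ w) := by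
        gcongr
        have h := norm_add_le_add_mk_neg hK (s • v.1) w.1 (s * v.2)
        rwa [← hw, ← smul_eq_mul, ← Prod.smul_mk] at h
    _ = katetovSeminorm ξ v + katetovSeminorm ξ w := by
        rw [smul, smul, abs_of_nonneg hs₀, abs_of_nonneg (sub_nonneg.2 hs₁)]
        ring

theorem add_le (hK : IsKatetov ξ) (hC : ConvexOn ℝ Set.univ ξ) (v w : E × ℝ) :
    katetovSeminorm ξ (v + w) ≤ katetovSeminorm ξ v + katetovSeminorm ξ w := by
  rcases lt_or_ge 0 (v.2 * w.2) with hsame | hopp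
  · rcases (left_ne_zero_of_mul hsame.ne').lt_or_gt with hv | hv
    · have hw := neg_of_mul_pos_right hsame hv.le
      rw [← neg, neg_add, ← neg ξ v, ← neg ξ w]
      exact add_le_of_pos hC (neg_pos.2 hv) (neg_pos.2 hw)
    · exact add_le_of_pos hC hv (pos_of_mul_pos_right hsame hv.le)
  wlog h : |w.2| ≤ |v.2| generalizing v w
  · rw [add_comm v, add_comm (katetovSeminorm ξ v)]
    exact this w v (by rwa [mul_comm]) (le_of_not_ge h)
  rcases eq_or_ne v.2 0 with hv | hv
  · have hw : w.2 = 0 := by simpa [hv] using h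
    exact add_le_of_snd_eq_neg_mul hK le_rfl zero_le_one (by simp [hw])
  have hs₀ : 0 ≤ -(w.2 / v.2) := by
    rw [neg_nonneg, show w.2 / v.2 = v.2 * w.2 / v.2 ^ 2 by field_simp]
    exact div_nonpos_of_nonpos_of_nonneg hopp (sq_nonneg _)
  have hs₁ : -(w.2 / v.2) ≤ 1 := by
    refine (neg_le_abs _).trans ?_
    rw [abs_div]
    exact div_le_one_of_le₀ h (abs_nonneg _)
  exact add_le_of_snd_eq_neg_mul hK hs₀ hs₁ (by field_simp)

end katetovSeminorm

/-- If `ξ` is a convex Katětov function on a real normed space `E`, then `N^ξ` is a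
seminorm on `E × ℝ` whose restriction to `E × {0}` is the norm of `E`. -/
theorem katetovSeminorm_isSeminorm {E : Type*} [NormedAddCommGroup E] [NormedSpace ℝ E]
    (ξ : E → ℝ) (hK : IsKatetov ξ) (hC : ConvexOn ℝ Set.univ ξ) :
    (∀ (t : ℝ) (v : E × ℝ), katetovSeminorm ξ (t • v) = |t| * katetovSeminorm ξ v) ∧
    (∀ v w : E × ℝ, katetovSeminorm ξ (v + w) ≤ katetovSeminorm ξ v + katetovSeminorm ξ w) ∧
    (∀ a : E, katetovSeminorm ξ (a, 0) = ‖a‖) :=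
  ⟨katetovSeminorm.smul ξ, katetovSeminorm.add_le hK hC, katetovSeminorm.mk_zero ξ⟩
end

section
/- Let E be a real normed space. The map ξ ↦ N^ξ is a bijection from the set of convex Katětov functions on E onto the set of seminorms N on E × ℝ satisfying N(a, 0) = ‖a‖ for all a ∈ E; its inverse sends such a seminorm N to the function a ↦ N(a, 1). In particular, for every seminorm N on E × ℝ with N(a,0) = ‖a‖ for all a ∈ E, the function a ↦ N(a, 1) is a convex Katětov function on E. -/
/-- A seminorm (as a bare function): absolutely homogeneous and subadditive. -/
def IsSeminorm {V : Type*} [AddCommGroup V] [Module ℝ V] (N : V → ℝ) : Prop :=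
  (∀ (t : ℝ) (v : V), N (t • v) = |t| * N v) ∧ ∀ v w : V, N (v + w) ≤ N v + N w

section Katetov

variable {E : Type*} [NormedAddCommGroup E] {ξ : E → ℝ}

lemma IsKatetov.le_add_norm_sub (hk : IsKatetov ξ) (x y : E) : ξ x ≤ ξ y + ‖x - y‖ := by
  have h := (abs_le.mp (hk x y).1).2
  rw [dist_eq_norm] at h
  linarith

lemma IsKatetov.norm_sub_le_add (hk : IsKatetov ξ) (x y : E) : ‖x - y‖ ≤ ξ x + ξ y :=
  dist_eq_norm x y ▸ (hk x y).2

variable [NormedSpace ℝ E]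

lemma IsKatetov.apply_smul_add_smul_le_of_nonpos (hk : IsKatetov ξ) (x y : E) {s t : ℝ}
    (hs : s ≤ 0) (hst : s + t = 1) : ξ (s • x + t • y) ≤ -s * ξ x + t * ξ y := by
  obtain rfl : t = 1 - s := by linarith
  have hxy : s • x + (1 - s) • y - y = (-s) • (y - x) := by module
  calc ξ (s • x + (1 - s) • y) ≤ ξ y + ‖s • x + (1 - s) • y - y‖ := hk.le_add_norm_sub _ _
    _ = ξ y + -s * ‖y - x‖ := by rw [hxy, norm_smul, Real.norm_eq_abs, abs_of_nonneg (by linarith)]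
    _ ≤ ξ y + -s * (ξ y + ξ x) :=
      add_le_add_right (mul_le_mul_of_nonneg_left (hk.norm_sub_le_add y x) (neg_nonneg.mpr hs)) _
    _ = -s * ξ x + (1 - s) * ξ y := by ring

lemma IsKatetov.apply_smul_add_smul_le (hk : IsKatetov ξ) (hc : ConvexOn ℝ Set.univ ξ)
    (x y : E) {s t : ℝ} (hst : s + t = 1) : ξ (s • x + t • y) ≤ |s| * ξ x + |t| * ξ y := by
  rcases le_or_gt s 0 with hs | hs
  · rw [abs_of_nonpos hs, abs_of_nonneg (by linarith)]
    exact hk.apply_smul_add_smul_le_of_nonpos x y hs hst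
  rcases le_or_gt t 0 with ht | ht
  · rw [abs_of_nonpos ht, abs_of_pos hs, add_comm (s • x), add_comm (s * _)]
    exact hk.apply_smul_add_smul_le_of_nonpos y x ht (by linarith)
  · rw [abs_of_pos hs, abs_of_pos ht]
    exact hc.2 (Set.mem_univ x) (Set.mem_univ y) hs.le ht.le hst

end Katetov

section KatetovSeminorm

variable {E : Type*} [NormedAddCommGroup E] [NormedSpace ℝ E] {ξ : E → ℝ}

@[simp]
lemma katetovSeminorm_mk_zero (ξ : E → ℝ) (a : E) : katetovSeminorm ξ (a, 0) = ‖a‖ := by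
  simp [katetovSeminorm]

lemma katetovSeminorm_mk_of_ne_zero (ξ : E → ℝ) (a : E) {α : ℝ} (hα : α ≠ 0) :
    katetovSeminorm ξ (a, α) = |α| * ξ (α⁻¹ • a) := by
  simp [katetovSeminorm, hα]

@[simp]
lemma katetovSeminorm_mk_one (ξ : E → ℝ) (a : E) : katetovSeminorm ξ (a, 1) = ξ a := by
  simp [katetovSeminorm]

lemma katetovSeminorm_smul_mk (ξ : E → ℝ) (α : ℝ) (x : E) :
    katetovSeminorm ξ (α • x, α) = |α| * ξ x := by
  rcases eq_or_ne α 0 with rfl | hα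
  · simp
  · rw [katetovSeminorm_mk_of_ne_zero ξ _ hα, inv_smul_smul₀ hα]

lemma katetovSeminorm_smul (ξ : E → ℝ) (t : ℝ) (v : E × ℝ) :
    katetovSeminorm ξ (t • v) = |t| * katetovSeminorm ξ v := by
  obtain ⟨a, α⟩ := v
  rcases eq_or_ne α 0 with rfl | hα
  · simp [norm_smul]
  · obtain ⟨x, rfl⟩ : ∃ x, a = α • x := ⟨α⁻¹ • a, (smul_inv_smul₀ hα a).symm⟩
    rw [Prod.smul_mk, smul_smul, smul_eq_mul, katetovSeminorm_smul_mk, katetovSeminorm_smul_mk,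
      abs_mul, mul_assoc]

lemma katetovSeminorm_add_mk_zero_le (hk : IsKatetov ξ) (a : E) (w : E × ℝ) :
    katetovSeminorm ξ ((a, 0) + w) ≤ ‖a‖ + katetovSeminorm ξ w := by
  obtain ⟨b, β⟩ := w
  rw [Prod.mk_add_mk, zero_add]
  rcases eq_or_ne β 0 with rfl | hβ
  · simpa using norm_add_le a b
  rw [katetovSeminorm_mk_of_ne_zero ξ _ hβ, katetovSeminorm_mk_of_ne_zero ξ _ hβ]
  calc |β| * ξ (β⁻¹ • (a + b)) ≤ |β| * (ξ (β⁻¹ • b) + ‖β⁻¹ • (a + b) - β⁻¹ • b‖) := by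
        gcongr; exact hk.le_add_norm_sub _ _
    _ = ‖a‖ + |β| * ξ (β⁻¹ • b) := by
        rw [← smul_sub, add_sub_cancel_right, norm_smul, Real.norm_eq_abs, abs_inv,
          mul_add, mul_inv_cancel_left₀ (abs_ne_zero.mpr hβ), add_comm]

lemma katetovSeminorm_smul_add_smul_le (hk : IsKatetov ξ) (hc : ConvexOn ℝ Set.univ ξ)
    (α β : ℝ) (x y : E) :
    katetovSeminorm ξ (α • x + β • y, α + β) ≤ |α| * ξ x + |β| * ξ y := by
  rcases eq_or_ne (α + β) 0 with hγ | hγ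
  · obtain rfl : β = -α := by linarith
    calc katetovSeminorm ξ (α • x + -α • y, α + -α) = |α| * ‖x - y‖ := by
          rw [hγ, katetovSeminorm_mk_zero, neg_smul, ← sub_eq_add_neg, ← smul_sub, norm_smul,
            Real.norm_eq_abs]
      _ ≤ |α| * (ξ x + ξ y) := by gcongr; exact hk.norm_sub_le_add x y
      _ = |α| * ξ x + |-α| * ξ y := by rw [abs_neg]; ring
  · have hst : α / (α + β) + β / (α + β) = 1 := by field_simp
    have hz : (α + β)⁻¹ • (α • x + β • y) = (α / (α + β)) • x + (β / (α + β)) • y := by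
      rw [smul_add, smul_smul, smul_smul, div_eq_inv_mul, div_eq_inv_mul]
    calc katetovSeminorm ξ (α • x + β • y, α + β)
        = |α + β| * ξ ((α / (α + β)) • x + (β / (α + β)) • y) := by
          rw [katetovSeminorm_mk_of_ne_zero ξ _ hγ, hz]
      _ ≤ |α + β| * (|α / (α + β)| * ξ x + |β / (α + β)| * ξ y) := by
          gcongr; exact hk.apply_smul_add_smul_le hc x y hst
      _ = |α| * ξ x + |β| * ξ y := by
          rw [abs_div, abs_div]
          field_simp [abs_ne_zero.mpr hγ]

lemma katetovSeminorm_add_le (hk : IsKatetov ξ) (hc : ConvexOn ℝ Set.univ ξ) (v w : E × ℝ) :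
    katetovSeminorm ξ (v + w) ≤ katetovSeminorm ξ v + katetovSeminorm ξ w := by
  obtain ⟨a, α⟩ := v
  obtain ⟨b, β⟩ := w
  rcases eq_or_ne α 0 with rfl | hα
  · simpa using katetovSeminorm_add_mk_zero_le hk a (b, β)
  rcases eq_or_ne β 0 with rfl | hβ
  · simpa [add_comm] using katetovSeminorm_add_mk_zero_le hk b (a, α)
  obtain ⟨x, rfl⟩ : ∃ x, a = α • x := ⟨α⁻¹ • a, (smul_inv_smul₀ hα a).symm⟩
  obtain ⟨y, rfl⟩ : ∃ y, b = β • y := ⟨β⁻¹ • b, (smul_inv_smul₀ hβ b).symm⟩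
  rw [Prod.mk_add_mk, katetovSeminorm_smul_mk, katetovSeminorm_smul_mk]
  exact katetovSeminorm_smul_add_smul_le hk hc α β x y

lemma isSeminorm_katetovSeminorm (hk : IsKatetov ξ) (hc : ConvexOn ℝ Set.univ ξ) :
    IsSeminorm (katetovSeminorm ξ) :=
  ⟨katetovSeminorm_smul ξ, katetovSeminorm_add_le hk hc⟩

end KatetovSeminorm

namespace IsSeminorm

variable {V : Type*} [AddCommGroup V] [Module ℝ V] {N : V → ℝ}

def toSeminorm (hN : IsSeminorm N) : Seminorm ℝ V :=
  Seminorm.of N hN.2 fun t v => by rw [hN.1, Real.norm_eq_abs]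

@[simp]
lemma coe_toSeminorm (hN : IsSeminorm N) : ⇑hN.toSeminorm = N := rfl

end IsSeminorm

section SeminormRestriction

variable {E : Type*} [NormedAddCommGroup E] [NormedSpace ℝ E] {N : E × ℝ → ℝ}

lemma IsSeminorm.isKatetov_mk_one (hN : IsSeminorm N) (h0 : ∀ a : E, N (a, 0) = ‖a‖) :
    IsKatetov fun a : E => N (a, 1) := by
  intro x y
  let p := hN.toSeminorm
  have hxy : N (x - y, 0) = p ((x, 1) - (y, 1)) := by simp [p]
  rw [dist_eq_norm, ← h0, hxy]
  exact ⟨abs_sub_map_le_sub p _ _, map_sub_le_add p _ _⟩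

lemma IsSeminorm.convexOn_mk_one (hN : IsSeminorm N) :
    ConvexOn ℝ Set.univ fun a : E => N (a, 1) :=
  Set.preimage_univ ▸
    hN.toSeminorm.convexOn.comp_affineMap ((AffineMap.id ℝ E).prod (AffineMap.const ℝ E 1))

lemma IsSeminorm.katetovSeminorm_mk_one (hN : IsSeminorm N) (h0 : ∀ a : E, N (a, 0) = ‖a‖) :
    katetovSeminorm (fun a : E => N (a, 1)) = N := by
  ext ⟨a, α⟩
  rcases eq_or_ne α 0 with rfl | hα
  · simp [h0]
  · rw [katetovSeminorm_mk_of_ne_zero _ _ hα, ← hN.1, Prod.smul_mk, smul_inv_smul₀ hα,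
      smul_eq_mul, mul_one]

end SeminormRestriction

/-- The map `ξ ↦ N^ξ` is a bijection from the convex Katětov functions on `E` onto the
seminorms on `E × ℝ` extending the norm of `E`, with inverse `N ↦ (a ↦ N (a, 1))`.
In particular, `a ↦ N (a, 1)` is a convex Katětov function for every such seminorm `N`. -/
theorem katetovSeminorm_bijective {E : Type*} [NormedAddCommGroup E] [NormedSpace ℝ E] :
    Set.BijOn (katetovSeminorm (E := E))
        {ξ : E → ℝ | IsKatetov ξ ∧ ConvexOn ℝ Set.univ ξ}
        {N : E × ℝ → ℝ | IsSeminorm N ∧ ∀ a : E, N (a, 0) = ‖a‖} ∧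
    Set.InvOn (fun N : E × ℝ → ℝ => fun a : E => N (a, 1)) (katetovSeminorm (E := E))
        {ξ : E → ℝ | IsKatetov ξ ∧ ConvexOn ℝ Set.univ ξ}
        {N : E × ℝ → ℝ | IsSeminorm N ∧ ∀ a : E, N (a, 0) = ‖a‖} ∧
    ∀ N : E × ℝ → ℝ, IsSeminorm N → (∀ a : E, N (a, 0) = ‖a‖) →
      IsKatetov (fun a : E => N (a, 1)) ∧ ConvexOn ℝ Set.univ (fun a : E => N (a, 1)) := by
  have hback : ∀ N : E × ℝ → ℝ, IsSeminorm N → (∀ a : E, N (a, 0) = ‖a‖) →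
      IsKatetov (fun a : E => N (a, 1)) ∧ ConvexOn ℝ Set.univ (fun a : E => N (a, 1)) :=
    fun N hN h0 => ⟨hN.isKatetov_mk_one h0, hN.convexOn_mk_one⟩
  have hinv : Set.InvOn (fun N : E × ℝ → ℝ => fun a : E => N (a, 1)) (katetovSeminorm (E := E))
      {ξ : E → ℝ | IsKatetov ξ ∧ ConvexOn ℝ Set.univ ξ}
      {N : E × ℝ → ℝ | IsSeminorm N ∧ ∀ a : E, N (a, 0) = ‖a‖} :=
    ⟨fun ξ _ => funext (katetovSeminorm_mk_one ξ), fun N hN => hN.1.katetovSeminorm_mk_one hN.2⟩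
  have hmaps : Set.MapsTo (katetovSeminorm (E := E))
      {ξ : E → ℝ | IsKatetov ξ ∧ ConvexOn ℝ Set.univ ξ}
      {N : E × ℝ → ℝ | IsSeminorm N ∧ ∀ a : E, N (a, 0) = ‖a‖} :=
    fun ξ hξ => ⟨isSeminorm_katetovSeminorm hξ.1 hξ.2, katetovSeminorm_mk_zero ξ⟩
  exact ⟨hinv.bijOn hmaps (fun N hN => hback N hN.1 hN.2), hinv, hback⟩
end

section
/- Let E be a real normed space, let X ⊆ Y ⊆ E with X nonempty and both X and Y convex, and let ξ : X → ℝ be a convex Katětov function on X. Then the Katětov extension of ξ to Y, namely the function ŷ : Y → ℝ given by ŷ(y) = inf_{x ∈ X} (‖y − x‖ + ξ(x)), is a convex Katětov function on Y. -/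
/-- `ξ` is a Katětov function on the subset `s`: `|ξ x - ξ y| ≤ d(x,y)` and
`d(x,y) ≤ ξ x + ξ y` for all `x, y ∈ s`. -/
def IsKatetovOn {X : Type*} [MetricSpace X] (s : Set X) (ξ : X → ℝ) : Prop :=
  ∀ x ∈ s, ∀ y ∈ s, |ξ x - ξ y| ≤ dist x y ∧ dist x y ≤ ξ x + ξ y

/-- The Katětov extension of `ξ` from the subset `s` : `y ↦ inf_{x ∈ s} (‖y - x‖ + ξ x)`. -/
noncomputable def katetovExt {E : Type*} [NormedAddCommGroup E] (s : Set E) (ξ : E → ℝ)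
    (y : E) : ℝ :=
  ⨅ x : s, (‖y - (x : E)‖ + ξ x)

/-- If `X ⊆ Y ⊆ E` are convex, `X` nonempty, and `ξ` is a convex Katětov function on `X`,
then the Katětov extension of `ξ` to `Y` is a convex Katětov function on `Y`. -/
theorem katetovExt_convexKatetov {E : Type*} [NormedAddCommGroup E] [NormedSpace ℝ E]
    (X Y : Set E) (hXY : X ⊆ Y) (hX : X.Nonempty) (hXc : Convex ℝ X) (hYc : Convex ℝ Y)
    (ξ : E → ℝ) (hK : IsKatetovOn X ξ) (hC : ConvexOn ℝ X ξ) :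
    IsKatetovOn Y (katetovExt X ξ) ∧ ConvexOn ℝ Y (katetovExt X ξ) := by
  obtain ⟨x₀, hx₀⟩ := hX
  haveI : Nonempty X := ⟨⟨x₀, hx₀⟩⟩
  have hbdd : ∀ y : E, BddBelow (Set.range fun x : X => ‖y - (x : E)‖ + ξ x) := by
    intro y
    refine ⟨ξ x₀ - ‖y - x₀‖, ?_⟩
    rintro _ ⟨x, rfl⟩
    show ξ x₀ - ‖y - x₀‖ ≤ ‖y - (x : E)‖ + ξ x
    have h1 : |ξ x₀ - ξ x| ≤ dist x₀ (x : E) := (hK x₀ hx₀ x x.2).1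
    have h2 : ξ x₀ - ξ x ≤ ‖x₀ - (x : E)‖ := by
      rw [← dist_eq_norm]; exact (abs_le.mp h1).2
    have h3 : ‖x₀ - (x : E)‖ ≤ ‖x₀ - y‖ + ‖y - (x : E)‖ :=
      norm_sub_le_norm_sub_add_norm_sub x₀ y (x : E)
    have h4 : ‖y - x₀‖ = ‖x₀ - y‖ := norm_sub_rev _ _
    linarith
  have key : ∀ (y : E) (x : X), katetovExt X ξ y ≤ ‖y - (x : E)‖ + ξ x := by
    intro y x
    exact ciInf_le (hbdd y) x
  have hle : ∀ (y : E) (c : ℝ), (∀ x : X, c ≤ ‖y - (x : E)‖ + ξ x) → c ≤ katetovExt X ξ y :=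
    fun y c h => le_ciInf h
  constructor
  · intro y hy y' hy'
    constructor
    · rw [abs_sub_le_iff]
      constructor
      · have : katetovExt X ξ y - dist y y' ≤ katetovExt X ξ y' := by
          refine hle _ _ fun x => ?_
          have := key y x
          have htri : ‖y - (x : E)‖ ≤ ‖y - y'‖ + ‖y' - (x : E)‖ :=
            norm_sub_le_norm_sub_add_norm_sub y y' (x : E)
          rw [dist_eq_norm]
          linarith
        linarith
      · have : katetovExt X ξ y' - dist y y' ≤ katetovExt X ξ y := by
          refine hle _ _ fun x => ?_
          have := key y' x
          have htri : ‖y' - (x : E)‖ ≤ ‖y' - y‖ + ‖y - (x : E)‖ :=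
            norm_sub_le_norm_sub_add_norm_sub y' y (x : E)
          rw [dist_eq_norm, norm_sub_rev] at *
          linarith
        linarith
    · have : dist y y' - katetovExt X ξ y' ≤ katetovExt X ξ y := by
        refine hle _ _ fun x => ?_
        have : dist y y' - (‖y - (x : E)‖ + ξ x) ≤ katetovExt X ξ y' := by
          refine hle _ _ fun x' => ?_
          have hxx' : dist (x : E) (x' : E) ≤ ξ x + ξ x' := (hK x x.2 x' x'.2).2
          have h1 : ‖y - y'‖ ≤ ‖y - (x : E)‖ + ‖(x : E) - y'‖ :=
            norm_sub_le_norm_sub_add_norm_sub _ _ _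
          have h2 : ‖(x : E) - y'‖ ≤ ‖(x : E) - (x' : E)‖ + ‖(x' : E) - y'‖ :=
            norm_sub_le_norm_sub_add_norm_sub _ _ _
          rw [dist_eq_norm] at hxx' ⊢
          have h3 : ‖(x' : E) - y'‖ = ‖y' - (x' : E)‖ := norm_sub_rev _ _
          linarith
        linarith
      linarith
  · refine ⟨hYc, ?_⟩
    intro y hy y' hy' a b ha hb hab
    refine le_of_forall_pos_le_add fun ε hε => ?_
    obtain ⟨x, hx⟩ := exists_lt_of_ciInf_lt (show katetovExt X ξ y < katetovExt X ξ y + ε/2 by linarith)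
    obtain ⟨x', hx'⟩ := exists_lt_of_ciInf_lt (show katetovExt X ξ y' < katetovExt X ξ y' + ε/2 by linarith)
    set z : E := a • (x : E) + b • (x' : E) with hz
    have hzX : z ∈ X := hXc x.2 x'.2 ha hb hab
    have hkey := key (a • y + b • y') ⟨z, hzX⟩
    have hnorm : ‖(a • y + b • y') - z‖ ≤ a * ‖y - (x : E)‖ + b * ‖y' - (x' : E)‖ := by
      have : (a • y + b • y') - z = a • (y - (x : E)) + b • (y' - (x' : E)) := by
        simp [hz, smul_sub]; abel
      rw [this]
      calc ‖a • (y - (x : E)) + b • (y' - (x' : E))‖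
          ≤ ‖a • (y - (x : E))‖ + ‖b • (y' - (x' : E))‖ := norm_add_le _ _
        _ = a * ‖y - (x : E)‖ + b * ‖y' - (x' : E)‖ := by
            rw [norm_smul, norm_smul, Real.norm_of_nonneg ha, Real.norm_of_nonneg hb]
    have hconv : ξ z ≤ a * ξ x + b * ξ x' := hC.2 x.2 x'.2 ha hb hab
    have ha1 : a ≤ 1 := by linarith
    have hb1 : b ≤ 1 := by linarith
    have h1 : katetovExt X ξ (a • y + b • y') ≤
        a * (‖y - (x : E)‖ + ξ x) + b * (‖y' - (x' : E)‖ + ξ x') := by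
      calc katetovExt X ξ (a • y + b • y') ≤ ‖(a • y + b • y') - z‖ + ξ z := hkey
        _ ≤ a * ‖y - (x : E)‖ + b * ‖y' - (x' : E)‖ + (a * ξ x + b * ξ x') := by linarith
        _ = _ := by ring
    have h2 : a * (‖y - (x : E)‖ + ξ x) ≤ a * (katetovExt X ξ y + ε/2) :=
      mul_le_mul_of_nonneg_left hx.le ha
    have h3 : b * (‖y' - (x' : E)‖ + ξ x') ≤ b * (katetovExt X ξ y' + ε/2) :=
      mul_le_mul_of_nonneg_left hx'.le hb
    have : a * (katetovExt X ξ y + ε/2) + b * (katetovExt X ξ y' + ε/2)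
        = a * katetovExt X ξ y + b * katetovExt X ξ y' + ε/2 := by
      have : a * (ε/2) + b * (ε/2) = ε/2 := by rw [← add_mul, hab, one_mul]
      ring_nf
      ring_nf at this
      linarith
    simp only [smul_eq_mul] at *
    linarith
end

section
/- Let E, F₀, F₁ be real normed spaces and let i₀ : E → F₀ and i₁ : E → F₁ be linear isometric embeddings. Define N : F₀ × F₁ → ℝ by N(a, b) = inf_{c ∈ E} (‖a + i₀c‖_{F₀} + ‖b − i₁c‖_{F₁}) (the pair (a,b) encoding the element a + b of the coproduct F₀ ⊕_E F₁). Then N is a seminorm on F₀ × F₁ with N(a, 0) = ‖a‖_{F₀} and N(0, b) = ‖b‖_{F₁} for all a ∈ F₀, b ∈ F₁, and N(i₀c, −i₁c) = 0 for all c ∈ E; moreover, N is the greatest such seminorm: every seminorm M on F₀ × F₁ satisfying M(a,0) ≤ ‖a‖_{F₀}, M(0,b) ≤ ‖b‖_{F₁}, and M(i₀c, −i₁c) = 0 for all a, b, c, satisfies M ≤ N. -/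
/-- Given isometric extensions `i₀ : E → F₀`, `i₁ : E → F₁`, the function
`N(a, b) = inf_{c ∈ E} (‖a + i₀ c‖ + ‖b - i₁ c‖)` (where `(a,b)` encodes `a + b` in the
coproduct `F₀ ⊕_E F₁`) is a seminorm on `F₀ × F₁` extending both norms and vanishing on
`{(i₀ c, -i₁ c) : c ∈ E}`, and it is the greatest such seminorm. -/
theorem coproduct_greatest_seminorm {E F₀ F₁ : Type*}
    [NormedAddCommGroup E] [NormedSpace ℝ E]
    [NormedAddCommGroup F₀] [NormedSpace ℝ F₀]
    [NormedAddCommGroup F₁] [NormedSpace ℝ F₁]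
    (i₀ : E →ₗᵢ[ℝ] F₀) (i₁ : E →ₗᵢ[ℝ] F₁)
    (N : F₀ × F₁ → ℝ) (hN : ∀ (a : F₀) (b : F₁), N (a, b) = ⨅ c : E, (‖a + i₀ c‖ + ‖b - i₁ c‖)) :
    IsSeminorm N ∧
    (∀ a : F₀, N (a, 0) = ‖a‖) ∧
    (∀ b : F₁, N (0, b) = ‖b‖) ∧
    (∀ c : E, N (i₀ c, -i₁ c) = 0) ∧
    ∀ M : F₀ × F₁ → ℝ, IsSeminorm M → (∀ a : F₀, M (a, 0) ≤ ‖a‖) →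
      (∀ b : F₁, M (0, b) ≤ ‖b‖) → (∀ c : E, M (i₀ c, -i₁ c) = 0) →
      ∀ p : F₀ × F₁, M p ≤ N p := by
  have hbdd : ∀ (a : F₀) (b : F₁),
      BddBelow (Set.range fun c : E => ‖a + i₀ c‖ + ‖b - i₁ c‖) := by
    intro a b
    exact ⟨0, by rintro x ⟨c, rfl⟩; positivity⟩
  have hle : ∀ (a : F₀) (b : F₁) (c : E), N (a, b) ≤ ‖a + i₀ c‖ + ‖b - i₁ c‖ := by
    intro a b c; rw [hN]; exact ciInf_le (hbdd a b) c
  have hnn : ∀ (a : F₀) (b : F₁), 0 ≤ N (a, b) := by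
    intro a b; rw [hN]; exact le_ciInf fun c => by positivity
  have ha0 : ∀ a : F₀, N (a, 0) = ‖a‖ := by
    intro a
    refine le_antisymm (by simpa using hle a 0 0) ?_
    rw [hN]
    refine le_ciInf fun c => ?_
    have h1 : ‖(0 : F₁) - i₁ c‖ = ‖i₀ c‖ := by
      simp [i₁.norm_map, i₀.norm_map]
    rw [h1]
    calc ‖a‖ = ‖(a + i₀ c) - i₀ c‖ := by congr 1; abel
      _ ≤ ‖a + i₀ c‖ + ‖i₀ c‖ := norm_sub_le _ _
  have hb0 : ∀ b : F₁, N (0, b) = ‖b‖ := by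
    intro b
    refine le_antisymm (by simpa using hle 0 b 0) ?_
    rw [hN]
    refine le_ciInf fun c => ?_
    have h1 : ‖(0 : F₀) + i₀ c‖ = ‖i₁ c‖ := by
      simp [i₁.norm_map, i₀.norm_map]
    rw [h1]
    calc ‖b‖ = ‖i₁ c + (b - i₁ c)‖ := by congr 1; abel
      _ ≤ ‖i₁ c‖ + ‖b - i₁ c‖ := norm_add_le _ _
  have hker : ∀ c : E, N (i₀ c, -i₁ c) = 0 := by
    intro c
    refine le_antisymm ?_ (hnn _ _)
    have := hle (i₀ c) (-i₁ c) (-c)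
    simpa using this
  -- homogeneity
  have hhom : ∀ (t : ℝ) (v : F₀ × F₁), N (t • v) = |t| * N v := by
    intro t ⟨a, b⟩
    rcases eq_or_ne t 0 with rfl | ht
    · have : N (0, 0) = 0 := le_antisymm (by simpa using hle 0 0 0) (hnn 0 0)
      rw [zero_smul, abs_zero, zero_mul]; exact this
    · have hsurj : Function.Surjective fun c : E => t • c :=
        fun x => ⟨t⁻¹ • x, smul_inv_smul₀ ht x⟩
      have key : (⨅ c : E, (‖t • a + i₀ c‖ + ‖t • b - i₁ c‖))
          = ⨅ c : E, (‖t • a + i₀ (t • c)‖ + ‖t • b - i₁ (t • c)‖) := by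
        rw [iInf, iInf]
        congr 1
        exact (Function.Surjective.range_comp hsurj
          (fun c => ‖t • a + i₀ c‖ + ‖t • b - i₁ c‖)).symm
      have heach : ∀ c : E, ‖t • a + i₀ (t • c)‖ + ‖t • b - i₁ (t • c)‖
          = |t| * (‖a + i₀ c‖ + ‖b - i₁ c‖) := by
        intro c
        rw [map_smul, map_smul, ← smul_add, ← smul_sub, norm_smul, norm_smul,
          Real.norm_eq_abs, mul_add]
      rw [Prod.smul_mk, hN, hN, key]
      simp_rw [heach]
      rw [← Real.mul_iInf_of_nonneg (abs_nonneg t)]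
  -- subadditivity
  have hadd : ∀ v w : F₀ × F₁, N (v + w) ≤ N v + N w := by
    rintro ⟨a, b⟩ ⟨a', b'⟩
    rw [show ((a,b) + (a',b') : F₀ × F₁) = (a + a', b + b') from rfl,
      hN a b, hN a' b']
    refine le_ciInf_add_ciInf fun c c' => ?_
    calc N (a + a', b + b') ≤ ‖(a + a') + i₀ (c + c')‖ + ‖(b + b') - i₁ (c + c')‖ :=
          hle _ _ _
      _ ≤ (‖a + i₀ c‖ + ‖b - i₁ c‖) + (‖a' + i₀ c'‖ + ‖b' - i₁ c'‖) := by
          rw [map_add, map_add]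
          have h0 : ‖a + a' + (i₀ c + i₀ c')‖ ≤ ‖a + i₀ c‖ + ‖a' + i₀ c'‖ := by
            calc ‖a + a' + (i₀ c + i₀ c')‖ = ‖(a + i₀ c) + (a' + i₀ c')‖ := by abel_nf
              _ ≤ _ := norm_add_le _ _
          have h1 : ‖b + b' - (i₁ c + i₁ c')‖ ≤ ‖b - i₁ c‖ + ‖b' - i₁ c'‖ := by
            calc ‖b + b' - (i₁ c + i₁ c')‖ = ‖(b - i₁ c) + (b' - i₁ c')‖ := by abel_nf
              _ ≤ _ := norm_add_le _ _
          linarith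
  refine ⟨⟨hhom, hadd⟩, ha0, hb0, hker, ?_⟩
  rintro M ⟨Mhom, Madd⟩ hMa hMb hMk ⟨a, b⟩
  rw [hN]
  refine le_ciInf fun c => ?_
  have h1 : M (a, b) ≤ M (a + i₀ c, b - i₁ c) + M ((-1 : ℝ) • (i₀ c, -i₁ c)) := by
    have : (a, b) = (a + i₀ c, b - i₁ c) + (-1 : ℝ) • ((i₀ c, -i₁ c) : F₀ × F₁) := by
      apply Prod.ext <;> simp
    rw [this]; exact Madd _ _
  have h2 : M ((-1 : ℝ) • ((i₀ c, -i₁ c) : F₀ × F₁)) = 0 := by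
    rw [Mhom, hMk]; ring
  have h3 : M (a + i₀ c, b - i₁ c) ≤ ‖a + i₀ c‖ + ‖b - i₁ c‖ := by
    have : ((a + i₀ c, b - i₁ c) : F₀ × F₁) = (a + i₀ c, 0) + (0, b - i₁ c) := by
      apply Prod.ext <;> simp
    rw [this]
    exact le_trans (Madd _ _) (add_le_add (hMa _) (hMb _))
  linarith
end

section
/- Let E be a real normed space, X a metric space, and φ : E → X an isometric map such that for every x ∈ X the function a ↦ d(φa, x) is convex on E. Then for any two points x₀, x₁ ∈ X there exists a 1-Lipschitz function λ : X → ℝ such that λ ∘ φ : E → ℝ is linear and λ(x₀) − λ(x₁) = d(x₀, x₁). -/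
/-!
Put `D = d(x₀, x₁)` and `q(a, b) = D - d(φ b, x₀) - d(φ a, x₁)`. The triangle inequality gives
`q(a, b) ≤ ‖b - a‖`, and `q` is concave on `E × E` by the convexity hypothesis. Hahn–Banach,
applied to the sublinear functional `v ↦ inf_{t ≥ 0, a, b} (‖v + t (b - a)‖ - t q(a, b))`, yields a
linear `f ≤ ‖·‖` with `q(a, b) ≤ f b - f a`. Let `μ x = inf_a (f a + d(φ a, x))` be the largest
1-Lipschitz extension of `f` along `φ`. Then `λ = min μ (μ x₀ - D + d(·, x₁))` satisfies
`λ x₀ - λ x₁ = D`, and `q(a, b) ≤ f b - f a` says exactly that `μ x₀ ≥ f a + D - d(φ a, x₁)`,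
i.e. that taking the minimum does not change `μ` on `φ(E)`.
-/

open Set NNReal

structure IsSublinear {E : Type*} [AddCommGroup E] [Module ℝ E] (p : E → ℝ) : Prop where
  map_smul_of_pos : ∀ c : ℝ, 0 < c → ∀ v, p (c • v) = c * p v
  map_add_le : ∀ v w, p (v + w) ≤ p v + p w

namespace IsSublinear

variable {E : Type*} [AddCommGroup E] [Module ℝ E] {p : E → ℝ}

theorem map_zero (hp : IsSublinear p) : p 0 = 0 := by
  have h := hp.map_smul_of_pos 2 two_pos 0
  rw [smul_zero] at h
  linarith

theorem map_smul_of_nonneg (hp : IsSublinear p) {c : ℝ} (hc : 0 ≤ c) (v : E) :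
    p (c • v) = c * p v := by
  rcases hc.eq_or_lt with rfl | hc
  · rw [zero_smul, zero_mul, hp.map_zero]
  · exact hp.map_smul_of_pos c hc v

theorem exists_linearMap_le (hp : IsSublinear p) : ∃ f : E →ₗ[ℝ] ℝ, ∀ v, f v ≤ p v := by
  obtain ⟨f, -, hf⟩ := exists_extension_of_le_sublinear ⟨⊥, 0⟩ p hp.map_smul_of_pos
    hp.map_add_le fun ⟨x, hx⟩ => by
      rw [Submodule.mem_bot] at hx
      subst hx
      simp [hp.map_zero]
  exact ⟨f, hf⟩

end IsSublinear

theorem isSublinear_norm (E : Type*) [SeminormedAddCommGroup E] [NormedSpace ℝ E] :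
    IsSublinear (‖·‖ : E → ℝ) where
  map_smul_of_pos c hc v := by rw [norm_smul, Real.norm_of_nonneg hc.le]
  map_add_le := norm_add_le

theorem ConcaveOn.mul_add_mul_le_perspective {F : Type*} [AddCommGroup F] [Module ℝ F]
    {s : Set F} {g : F → ℝ} (hg : ConcaveOn ℝ s g) {t₁ t₂ : ℝ} (h₁ : 0 ≤ t₁) (h₂ : 0 ≤ t₂)
    (h : 0 < t₁ + t₂) {z₁ z₂ : F} (hz₁ : z₁ ∈ s) (hz₂ : z₂ ∈ s) :
    t₁ * g z₁ + t₂ * g z₂ ≤ (t₁ + t₂) * g ((t₁ + t₂)⁻¹ • (t₁ • z₁ + t₂ • z₂)) := by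
  have hcomb := hg.2 hz₁ hz₂ (div_nonneg h₁ h.le) (div_nonneg h₂ h.le)
    (by rw [← add_div, div_self h.ne'])
  rw [smul_add, smul_smul, smul_smul, ← div_eq_inv_mul, ← div_eq_inv_mul]
  rw [smul_eq_mul, smul_eq_mul] at hcomb
  calc t₁ * g z₁ + t₂ * g z₂ = (t₁ + t₂) * (t₁ / (t₁ + t₂) * g z₁ + t₂ / (t₁ + t₂) * g z₂) := by
        field_simp
    _ ≤ _ := mul_le_mul_of_nonneg_left hcomb h.le

section Sandwich

variable {E F : Type*} [AddCommGroup E] [Module ℝ E] [AddCommGroup F] [Module ℝ F]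
  {p : E → ℝ} {T : F →ₗ[ℝ] E} {g : F → ℝ}

/-- Its linear minorants are exactly the linear `f` with `f ≤ p` and `g ≤ f ∘ T`. -/
noncomputable def sandwichFunctional (p : E → ℝ) (T : F →ₗ[ℝ] E) (g : F → ℝ) (v : E) : ℝ :=
  ⨅ tz : ℝ≥0 × F, p (v + (tz.1 : ℝ) • T tz.2) - tz.1 * g tz.2

theorem IsSublinear.neg_map_neg_le_sub (hp : IsSublinear p) (hgp : ∀ z, g z ≤ p (T z)) (v : E)
    {t : ℝ} (ht : 0 ≤ t) (z : F) : -p (-v) ≤ p (v + t • T z) - t * g z := by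
  have hg : t * g z ≤ p (t • T z) := by
    rw [hp.map_smul_of_nonneg ht]
    exact mul_le_mul_of_nonneg_left (hgp z) ht
  have hadd := hp.map_add_le (v + t • T z) (-v)
  rw [add_neg_cancel_comm] at hadd
  linarith

theorem sandwichFunctional_le (hp : IsSublinear p) (hgp : ∀ z, g z ≤ p (T z)) (v : E) {t : ℝ}
    (ht : 0 ≤ t) (z : F) : sandwichFunctional p T g v ≤ p (v + t • T z) - t * g z := by
  refine ciInf_le (f := fun tz : ℝ≥0 × F => p (v + (tz.1 : ℝ) • T tz.2) - tz.1 * g tz.2)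
    ⟨-p (-v), ?_⟩ (⟨t, ht⟩, z)
  rintro _ ⟨tz, rfl⟩
  exact hp.neg_map_neg_le_sub hgp v tz.1.coe_nonneg tz.2

theorem le_sandwichFunctional {v : E} {c : ℝ}
    (h : ∀ t : ℝ, 0 ≤ t → ∀ z, c ≤ p (v + t • T z) - t * g z) :
    c ≤ sandwichFunctional p T g v :=
  le_ciInf fun tz => h tz.1 tz.1.coe_nonneg tz.2

theorem sandwichFunctional_le_self (hp : IsSublinear p) (hgp : ∀ z, g z ≤ p (T z)) (v : E) :
    sandwichFunctional p T g v ≤ p v := by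
  simpa using sandwichFunctional_le hp hgp v le_rfl 0

theorem sandwichFunctional_neg_le (hp : IsSublinear p) (hgp : ∀ z, g z ≤ p (T z)) (z : F) :
    sandwichFunctional p T g (-T z) ≤ -g z := by
  simpa [hp.map_zero] using sandwichFunctional_le hp hgp (-T z) zero_le_one z

theorem sandwichFunctional_smul_le (hp : IsSublinear p) (hgp : ∀ z, g z ≤ p (T z)) {c : ℝ}
    (hc : 0 < c) (v : E) : sandwichFunctional p T g (c • v) ≤ c * sandwichFunctional p T g v := by
  rw [← div_le_iff₀' hc]
  refine le_sandwichFunctional fun t ht z => ?_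
  rw [div_le_iff₀' hc]
  calc sandwichFunctional p T g (c • v) ≤ p (c • v + (c * t) • T z) - (c * t) * g z :=
        sandwichFunctional_le hp hgp _ (mul_nonneg hc.le ht) z
    _ = c * (p (v + t • T z) - t * g z) := by
        rw [mul_smul, ← smul_add, hp.map_smul_of_pos c hc]
        ring

theorem sandwichFunctional_add_le (hp : IsSublinear p) (hg : ConcaveOn ℝ univ g)
    (hgp : ∀ z, g z ≤ p (T z)) (v w : E) :
    sandwichFunctional p T g (v + w) ≤ sandwichFunctional p T g v + sandwichFunctional p T g w := by
  refine le_ciInf_add_ciInf fun ⟨t₁, z₁⟩ ⟨t₂, z₂⟩ => ?_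
  dsimp only
  rcases (add_nonneg t₁.coe_nonneg t₂.coe_nonneg).eq_or_lt with h0 | hpos
  · obtain ⟨rfl, rfl⟩ := add_eq_zero.1 (NNReal.coe_eq_zero.1 (by push_cast; exact h0.symm))
    simpa using (sandwichFunctional_le_self hp hgp (v + w)).trans (hp.map_add_le v w)
  · have hgz := hg.mul_add_mul_le_perspective t₁.coe_nonneg t₂.coe_nonneg hpos
      (mem_univ z₁) (mem_univ z₂)
    set z := ((t₁ : ℝ) + t₂)⁻¹ • ((t₁ : ℝ) • z₁ + (t₂ : ℝ) • z₂) with hz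
    have hTz : ((t₁ : ℝ) + t₂) • T z = (t₁ : ℝ) • T z₁ + (t₂ : ℝ) • T z₂ := by
      rw [← map_smul, hz, smul_inv_smul₀ hpos.ne', map_add, map_smul, map_smul]
    have hp_split : p (v + w + ((t₁ : ℝ) + t₂) • T z) ≤
        p (v + (t₁ : ℝ) • T z₁) + p (w + (t₂ : ℝ) • T z₂) := by
      rw [hTz, add_add_add_comm]
      exact hp.map_add_le _ _
    have := sandwichFunctional_le hp hgp (v + w) hpos.le z
    linarith

theorem isSublinear_sandwichFunctional (hp : IsSublinear p) (hg : ConcaveOn ℝ univ g)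
    (hgp : ∀ z, g z ≤ p (T z)) : IsSublinear (sandwichFunctional p T g) where
  map_smul_of_pos c hc v := by
    refine le_antisymm (sandwichFunctional_smul_le hp hgp hc v) ?_
    have h := sandwichFunctional_smul_le hp hgp (inv_pos.2 hc) (c • v)
    rw [inv_smul_smul₀ hc.ne'] at h
    calc c * sandwichFunctional p T g v
        ≤ c * (c⁻¹ * sandwichFunctional p T g (c • v)) := mul_le_mul_of_nonneg_left h hc.le
      _ = sandwichFunctional p T g (c • v) := mul_inv_cancel_left₀ hc.ne' _
  map_add_le := sandwichFunctional_add_le hp hg hgp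

theorem exists_linearMap_le_of_concaveOn_le (hp : IsSublinear p) (hg : ConcaveOn ℝ univ g)
    (hgp : ∀ z, g z ≤ p (T z)) : ∃ f : E →ₗ[ℝ] ℝ, (∀ v, f v ≤ p v) ∧ ∀ z, g z ≤ f (T z) := by
  obtain ⟨f, hf⟩ := (isSublinear_sandwichFunctional hp hg hgp).exists_linearMap_le
  refine ⟨f, fun v => (hf v).trans (sandwichFunctional_le_self hp hgp v), fun z => ?_⟩
  have h := (hf (-T z)).trans (sandwichFunctional_neg_le hp hgp z)
  rw [map_neg] at h
  linarith

end Sandwich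

section McShane

variable {α X : Type*} [PseudoMetricSpace X] {φ : α → X} {f : α → ℝ}

noncomputable def mcShaneExtension (φ : α → X) (f : α → ℝ) (x : X) : ℝ :=
  ⨅ a, f a + dist (φ a) x

theorem mcShaneExtension_le [Nonempty α] (hf : ∀ a b, f a ≤ f b + dist (φ a) (φ b)) (x : X)
    (a : α) : mcShaneExtension φ f x ≤ f a + dist (φ a) x := by
  obtain ⟨a₀⟩ := ‹Nonempty α›
  refine ciInf_le ⟨f a₀ - dist (φ a₀) x, ?_⟩ a
  rintro _ ⟨b, rfl⟩
  linarith [hf a₀ b, dist_triangle (φ a₀) x (φ b), dist_comm x (φ b)]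

theorem le_mcShaneExtension [Nonempty α] {x : X} {c : ℝ} (h : ∀ a, c ≤ f a + dist (φ a) x) :
    c ≤ mcShaneExtension φ f x :=
  le_ciInf h

theorem mcShaneExtension_apply [Nonempty α] (hf : ∀ a b, f a ≤ f b + dist (φ a) (φ b)) (a : α) :
    mcShaneExtension φ f (φ a) = f a :=
  le_antisymm (by simpa using mcShaneExtension_le hf (φ a) a)
    (le_mcShaneExtension fun b => (hf a b).trans_eq (by rw [dist_comm]))

theorem lipschitzWith_mcShaneExtension [Nonempty α] (hf : ∀ a b, f a ≤ f b + dist (φ a) (φ b)) :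
    LipschitzWith 1 (mcShaneExtension φ f) := by
  refine LipschitzWith.of_le_add fun x y => sub_le_iff_le_add.1 (le_mcShaneExtension fun a => ?_)
  linarith [mcShaneExtension_le hf x a, dist_triangle (φ a) y x, dist_comm x y]

end McShane

theorem LipschitzWith.exists_truncation_sub_eq_dist {X : Type*} [PseudoMetricSpace X] {μ : X → ℝ}
    (hμ : LipschitzWith 1 μ) (x₀ x₁ : X) :
    ∃ lam : X → ℝ, LipschitzWith 1 lam ∧ lam x₀ - lam x₁ = dist x₀ x₁ ∧
      ∀ y, μ y + dist x₀ x₁ ≤ μ x₀ + dist y x₁ → lam y = μ y := by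
  refine ⟨fun x => min (μ x) (μ x₀ - dist x₀ x₁ + dist x x₁), ?_, ?_,
    fun y hy => min_eq_left (by linarith)⟩
  · simpa using
      hμ.min ((LipschitzWith.const (μ x₀ - dist x₀ x₁)).add (LipschitzWith.dist_left x₁))
  · have h := hμ.le_add_mul x₀ x₁
    simp only [NNReal.coe_one, one_mul] at h
    simp only [sub_add_cancel, min_self, dist_self, add_zero]
    rw [min_eq_right (by linarith)]
    ring

/-- If `X` is a metric space over the normed space `E` (i.e. `φ : E → X` is isometric and
`a ↦ d(φ a, x)` is convex for every `x ∈ X`), then for any `x₀, x₁ ∈ X` there is a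
1-Lipschitz function `λ : X → ℝ`, linear on `E`, with `λ x₀ - λ x₁ = d(x₀, x₁)`. -/
theorem exists_norming_lipschitz_functional (E : Type*) [NormedAddCommGroup E]
    [NormedSpace ℝ E] (X : Type*) [MetricSpace X] (φ : E → X) (hφ : Isometry φ)
    (hconv : ∀ x : X, ConvexOn ℝ Set.univ fun a : E => dist (φ a) x)
    (x₀ x₁ : X) :
    ∃ lam : X → ℝ, LipschitzWith 1 lam ∧ IsLinearMap ℝ (lam ∘ φ) ∧
      lam x₀ - lam x₁ = dist x₀ x₁ := by
  set D := dist x₀ x₁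
  let T : E × E →ₗ[ℝ] E := LinearMap.snd ℝ E E - LinearMap.fst ℝ E E
  let q : E × E → ℝ := fun z => D - dist (φ z.2) x₀ - dist (φ z.1) x₁
  have hq_concave : ConcaveOn ℝ univ q :=
    ((concaveOn_const D convex_univ).sub ((hconv x₀).comp_linearMap (LinearMap.snd ℝ E E))).sub
      ((hconv x₁).comp_linearMap (LinearMap.fst ℝ E E))
  have hq_le : ∀ z, q z ≤ ‖T z‖ := fun ⟨a, b⟩ => by
    have h := dist_triangle4 x₀ (φ b) (φ a) x₁
    rw [hφ.dist_eq, dist_eq_norm, dist_comm x₀ (φ b)] at h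
    show D - dist (φ b) x₀ - dist (φ a) x₁ ≤ ‖b - a‖
    linarith
  obtain ⟨f, hf_norm, hqf⟩ :=
    exists_linearMap_le_of_concaveOn_le (isSublinear_norm E) hq_concave hq_le
  have hf_lip : ∀ a b, f a ≤ f b + dist (φ a) (φ b) := fun a b => by
    rw [hφ.dist_eq, dist_eq_norm]
    linarith [hf_norm (a - b), map_sub f a b]
  obtain ⟨lam, hlam, hnorming, hlam_eq⟩ :=
    (lipschitzWith_mcShaneExtension hf_lip).exists_truncation_sub_eq_dist x₀ x₁
  have hcomp : lam ∘ φ = f := funext fun a => by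
    have h : f a + D - dist (φ a) x₁ ≤ mcShaneExtension φ f x₀ := le_mcShaneExtension fun b => by
      have hab : D - dist (φ b) x₀ - dist (φ a) x₁ ≤ f (b - a) := hqf (a, b)
      linarith [map_sub f b a]
    refine (hlam_eq (φ a) ?_).trans (mcShaneExtension_apply hf_lip a)
    rw [mcShaneExtension_apply hf_lip]
    linarith
  exact ⟨lam, hlam, hcomp ▸ f.isLinear, hnorming⟩
end

section
/- Let E and F be real normed spaces, k ≥ 1, and let x₁,…,x_k ∈ E and y₁,…,y_k ∈ F. Set r = sup { | ‖∑ᵢ sᵢxᵢ‖_E − ‖∑ᵢ sᵢyᵢ‖_F | : s ∈ ℝ^k, ∑ᵢ|sᵢ| = 1 }. Then: (a) there exist a real normed space V and linear isometric embeddings f : E → V and g : F → V such that ‖f(xᵢ) − g(yᵢ)‖_V ≤ r for all i; (b) r is least with this property: for every real normed space W and all linear isometric embeddings f' : E → W, g' : F → W, one has r ≤ max_i ‖f'(xᵢ) − g'(yᵢ)‖_W. -/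
/-!
Part (b) is the triangle inequality: in any common space,
`|‖∑ sᵢ xᵢ‖ - ‖∑ sᵢ yᵢ‖| ≤ ∑ |sᵢ| ‖f xᵢ - g yᵢ‖`, which is at most `maxᵢ ‖f xᵢ - g yᵢ‖`
when `∑ |sᵢ| = 1`.

For (a), homogeneity turns the definition of `r` into `|‖∑ sᵢ xᵢ‖ - ‖∑ sᵢ yᵢ‖| ≤ r ∑ |sᵢ|`
for every `s`. Give `E × F` the largest seminorm below `‖e‖ + ‖f‖` under which each
`(∑ sᵢ xᵢ, -∑ sᵢ yᵢ)` has size at most `r ∑ |sᵢ|`, namely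
`inf_s ‖e - ∑ sᵢ xᵢ‖ + ‖f + ∑ sᵢ yᵢ‖ + r ∑ |sᵢ|`. The inequality above is exactly what keeps
`e ↦ (e, 0)` and `f ↦ (0, f)` isometric, and `V` is the separation quotient.
-/

universe u v w

namespace Seminorm

variable {𝕜 M L : Type*} [NormedField 𝕜] [AddCommGroup M] [Module 𝕜 M] [AddCommGroup L]
  [Module 𝕜 L] (ρ : Seminorm 𝕜 M) (σ : Seminorm 𝕜 L) (T : L →ₗ[𝕜] M)

theorem bddBelow_range_map_sub_add (m : M) :
    BddBelow (Set.range fun l => ρ (m - T l) + σ l) :=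
  ⟨0, by rintro _ ⟨l, rfl⟩; positivity⟩

/-- The largest seminorm below `ρ` whose composite with `T` is below `σ`. -/
noncomputable def infConvMap : Seminorm 𝕜 M :=
  .ofSMulLE (fun m => ⨅ l, ρ (m - T l) + σ l)
    (le_antisymm (ciInf_le_of_le (bddBelow_range_map_sub_add ρ σ T 0) 0 (by simp))
      (le_ciInf fun _ => by positivity))
    (fun m m' => le_ciInf_add_ciInf fun l l' =>
      ciInf_le_of_le (bddBelow_range_map_sub_add ρ σ T _) (l + l') <| by
        rw [map_add, add_sub_add_comm]
        linarith [map_add_le_add ρ (m - T l) (m' - T l'), map_add_le_add σ l l'])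
    (fun c m => by
      rw [Real.mul_iInf_of_nonneg (norm_nonneg c)]
      exact le_ciInf fun l => ciInf_le_of_le (bddBelow_range_map_sub_add ρ σ T _) (c • l) <| by
        rw [map_smul, ← smul_sub, map_smul_eq_mul, map_smul_eq_mul, mul_add])

variable {ρ σ T}

theorem infConvMap_le (m : M) (l : L) : infConvMap ρ σ T m ≤ ρ (m - T l) + σ l :=
  ciInf_le (bddBelow_range_map_sub_add ρ σ T m) l

theorem infConvMap_le_left : infConvMap ρ σ T ≤ ρ := fun m =>
  (infConvMap_le m 0).trans_eq (by simp)

theorem infConvMap_apply_map_le (l : L) : infConvMap ρ σ T (T l) ≤ σ l :=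
  (infConvMap_le (T l) l).trans_eq (by simp)

theorem le_infConvMap {m : M} {a : ℝ} (h : ∀ l, a ≤ ρ (m - T l) + σ l) :
    a ≤ infConvMap ρ σ T m :=
  le_ciInf h

end Seminorm

def WithSeminorm {𝕜 M : Type*} [NormedField 𝕜] [AddCommGroup M] [Module 𝕜 M]
    (_ : Seminorm 𝕜 M) : Type _ :=
  M

namespace WithSeminorm

variable {𝕜 M : Type*} [NormedField 𝕜] [AddCommGroup M] [Module 𝕜 M] (p : Seminorm 𝕜 M)

instance : AddCommGroup (WithSeminorm p) := inferInstanceAs (AddCommGroup M)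

instance : Module 𝕜 (WithSeminorm p) := inferInstanceAs (Module 𝕜 M)

instance : SeminormedAddCommGroup (WithSeminorm p) :=
  AddGroupSeminorm.toSeminormedAddCommGroup (E := WithSeminorm p) p.toAddGroupSeminorm

instance : NormedSpace 𝕜 (WithSeminorm p) := ⟨fun c m => (map_smul_eq_mul p c m).le⟩

noncomputable def mkQ : M →ₗ[𝕜] SeparationQuotient (WithSeminorm p) :=
  (SeparationQuotient.mkCLM 𝕜 (WithSeminorm p)).toLinearMap

theorem norm_mkQ (m : M) : ‖mkQ p m‖ = p m := rfl

end WithSeminorm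

section Amalgam

open Seminorm

variable {𝕜 L : Type*} {E : Type u} {F : Type v} [NormedField 𝕜] [AddCommGroup L] [Module 𝕜 L]
  [SeminormedAddCommGroup E] [NormedSpace 𝕜 E] [SeminormedAddCommGroup F] [NormedSpace 𝕜 F]
  {A : L →ₗ[𝕜] E} {B : L →ₗ[𝕜] F} {σ : Seminorm 𝕜 L}

variable (A B σ) in
noncomputable def amalgamSeminorm : Seminorm 𝕜 (E × F) :=
  infConvMap ((normSeminorm 𝕜 E).comp (LinearMap.fst 𝕜 E F) +
    (normSeminorm 𝕜 F).comp (LinearMap.snd 𝕜 E F)) σ (A.prod (-B))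

theorem amalgamSeminorm_apply_le (l : L) : amalgamSeminorm A B σ (A l, -B l) ≤ σ l :=
  infConvMap_apply_map_le l

theorem le_amalgamSeminorm {p : E × F} {a : ℝ}
    (h : ∀ l, a ≤ ‖p.1 - A l‖ + ‖p.2 + B l‖ + σ l) : a ≤ amalgamSeminorm A B σ p :=
  le_infConvMap fun l => by simpa using h l

theorem amalgamSeminorm_inl (h : ∀ l, ‖A l‖ ≤ ‖B l‖ + σ l) (e : E) :
    amalgamSeminorm A B σ (e, 0) = ‖e‖ := by
  refine le_antisymm ((infConvMap_le_left _).trans_eq (by simp)) (le_amalgamSeminorm fun l => ?_)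
  rw [zero_add]
  linarith [norm_le_insert' e (A l), h l]

theorem amalgamSeminorm_inr (h : ∀ l, ‖B l‖ ≤ ‖A l‖ + σ l) (f : F) :
    amalgamSeminorm A B σ (0, f) = ‖f‖ := by
  refine le_antisymm ((infConvMap_le_left _).trans_eq (by simp)) (le_amalgamSeminorm fun l => ?_)
  rw [zero_sub, norm_neg]
  linarith [norm_le_add_norm_add f (B l), h l]

theorem exists_linearIsometry_amalgam (h : ∀ l, |‖A l‖ - ‖B l‖| ≤ σ l) :
    ∃ (V : Type (max u v)) (_ : NormedAddCommGroup V) (_ : NormedSpace 𝕜 V)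
      (f : E →ₗᵢ[𝕜] V) (g : F →ₗᵢ[𝕜] V), ∀ l, ‖f (A l) - g (B l)‖ ≤ σ l := by
  let p := amalgamSeminorm A B σ
  have hA l : ‖A l‖ ≤ ‖B l‖ + σ l := sub_le_iff_le_add'.mp (abs_sub_le_iff.mp (h l)).1
  have hB l : ‖B l‖ ≤ ‖A l‖ + σ l := sub_le_iff_le_add'.mp (abs_sub_le_iff.mp (h l)).2
  refine ⟨SeparationQuotient (WithSeminorm p), inferInstance, inferInstance,
    ⟨WithSeminorm.mkQ p ∘ₗ LinearMap.inl 𝕜 E F,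
      fun e => (WithSeminorm.norm_mkQ p _).trans (amalgamSeminorm_inl hA e)⟩,
    ⟨WithSeminorm.mkQ p ∘ₗ LinearMap.inr 𝕜 E F,
      fun f => (WithSeminorm.norm_mkQ p _).trans (amalgamSeminorm_inr hB f)⟩,
    fun l => ?_⟩
  have hsub : ((A l, 0) : E × F) - (0, B l) = (A l, -B l) := by simp
  change ‖WithSeminorm.mkQ p (A l, 0) - WithSeminorm.mkQ p (0, B l)‖ ≤ σ l
  rw [← map_sub, hsub, WithSeminorm.norm_mkQ]
  exact amalgamSeminorm_apply_le l

end Amalgam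

theorem Seminorm.le_sSup_sphere_mul {L : Type*} [AddCommGroup L] [Module ℝ L]
    (σ : Seminorm ℝ L) {D : L → ℝ} (hD : ∀ (c : ℝ) l, D (c • l) = |c| * D l) {C : ℝ}
    (hC : ∀ l, D l ≤ C * σ l) (l : L) :
    D l ≤ sSup {t | ∃ l', σ l' = 1 ∧ t = D l'} * σ l := by
  rcases (apply_nonneg σ l).eq_or_lt with h0 | hpos
  · simpa [← h0] using hC l
  have hbdd : BddAbove {t | ∃ l', σ l' = 1 ∧ t = D l'} :=
    ⟨C, by rintro _ ⟨l', h1, rfl⟩; simpa [h1] using hC l'⟩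
  have hunit : σ ((σ l)⁻¹ • l) = 1 := by
    rw [map_smul_eq_mul, norm_inv, Real.norm_of_nonneg hpos.le, inv_mul_cancel₀ hpos.ne']
  calc D l = D (σ l • (σ l)⁻¹ • l) := by rw [smul_inv_smul₀ hpos.ne']
    _ = σ l * D ((σ l)⁻¹ • l) := by rw [hD, abs_of_pos hpos]
    _ ≤ σ l * sSup {t | ∃ l', σ l' = 1 ∧ t = D l'} := by
      gcongr
      exact le_csSup hbdd ⟨_, hunit, rfl⟩
    _ = _ := mul_comm _ _

section FiniteFamilies

variable {ι : Type*} [Fintype ι] {E F W : Type*} [SeminormedAddCommGroup E] [NormedSpace ℝ E]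
  [SeminormedAddCommGroup F] [NormedSpace ℝ F] [SeminormedAddCommGroup W] [NormedSpace ℝ W]

variable (ι) in
def l1Seminorm : Seminorm ℝ (ι → ℝ) :=
  .of (fun s => ∑ i, |s i|) (fun s t =>
    (Finset.sum_le_sum fun i _ => abs_add_le (s i) (t i)).trans_eq Finset.sum_add_distrib)
    (fun c s => by simp [abs_mul, Finset.mul_sum])

@[simp]
theorem l1Seminorm_apply (s : ι → ℝ) : l1Seminorm ι s = ∑ i, |s i| := rfl

theorem norm_sum_smul_le (s : ι → ℝ) (x : ι → E) :
    ‖∑ i, s i • x i‖ ≤ (∑ i, |s i|) * ∑ i, ‖x i‖ :=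
  calc ‖∑ i, s i • x i‖ ≤ ∑ i, |s i| * ‖x i‖ := by
        simpa [norm_smul] using norm_sum_le Finset.univ fun i => s i • x i
    _ ≤ ∑ i, |s i| * ∑ j, ‖x j‖ := by
      gcongr with i
      exact Finset.single_le_sum (fun j _ => norm_nonneg (x j)) (Finset.mem_univ i)
    _ = _ := (Finset.sum_mul ..).symm

theorem abs_norm_sum_smul_sub_le_sSup_mul (x : ι → E) (y : ι → F) (s : ι → ℝ) :
    |‖∑ i, s i • x i‖ - ‖∑ i, s i • y i‖| ≤
      sSup {t | ∃ s : ι → ℝ, (∑ i, |s i|) = 1 ∧ t = |‖∑ i, s i • x i‖ - ‖∑ i, s i • y i‖|} *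
        ∑ i, |s i| := by
  refine (l1Seminorm ι).le_sSup_sphere_mul (D := fun s => |‖∑ i, s i • x i‖ - ‖∑ i, s i • y i‖|)
    (fun c s => ?_) (C := ∑ i, ‖x i‖ + ∑ i, ‖y i‖) (fun s => ?_) s
  · simp only [Pi.smul_apply, smul_eq_mul, ← smul_smul, ← Finset.smul_sum, norm_smul,
      Real.norm_eq_abs, ← mul_sub, abs_mul, abs_abs]
  · calc |‖∑ i, s i • x i‖ - ‖∑ i, s i • y i‖| ≤ ‖∑ i, s i • x i‖ + ‖∑ i, s i • y i‖ :=
          (abs_sub _ _).trans_eq (by rw [abs_norm, abs_norm])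
      _ ≤ _ := by
        rw [l1Seminorm_apply, mul_comm, mul_add]
        exact add_le_add (norm_sum_smul_le s x) (norm_sum_smul_le s y)

theorem abs_norm_sum_smul_sub_le (f : E →ₗᵢ[ℝ] W) (g : F →ₗᵢ[ℝ] W) (x : ι → E) (y : ι → F)
    (s : ι → ℝ) :
    |‖∑ i, s i • x i‖ - ‖∑ i, s i • y i‖| ≤ ∑ i, |s i| * ‖f (x i) - g (y i)‖ :=
  calc |‖∑ i, s i • x i‖ - ‖∑ i, s i • y i‖|
      = |‖∑ i, s i • f (x i)‖ - ‖∑ i, s i • g (y i)‖| := by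
        rw [← f.norm_map, ← g.norm_map, map_sum, map_sum]
        simp only [map_smul]
    _ ≤ ‖∑ i, s i • (f (x i) - g (y i))‖ := by
      simpa only [smul_sub, Finset.sum_sub_distrib] using abs_norm_sub_norm_le _ _
    _ ≤ ∑ i, |s i| * ‖f (x i) - g (y i)‖ := by
      simpa [norm_smul] using norm_sum_le Finset.univ fun i => s i • (f (x i) - g (y i))

theorem exists_sSup_abs_norm_sum_smul_sub_le [Nonempty ι] (f : E →ₗᵢ[ℝ] W) (g : F →ₗᵢ[ℝ] W)
    (x : ι → E) (y : ι → F) :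
    ∃ i, sSup {t | ∃ s : ι → ℝ, (∑ i, |s i|) = 1 ∧
      t = |‖∑ i, s i • x i‖ - ‖∑ i, s i • y i‖|} ≤ ‖f (x i) - g (y i)‖ := by
  obtain ⟨i₀, hi₀⟩ := Finite.exists_max fun i => ‖f (x i) - g (y i)‖
  refine ⟨i₀, Real.sSup_le ?_ (norm_nonneg _)⟩
  rintro _ ⟨s, hs, rfl⟩
  calc _ ≤ ∑ i, |s i| * ‖f (x i) - g (y i)‖ := abs_norm_sum_smul_sub_le f g x y s
    _ ≤ ∑ i, |s i| * ‖f (x i₀) - g (y i₀)‖ := by gcongr with i; exact hi₀ i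
    _ = _ := by rw [← Finset.sum_mul, hs, one_mul]

end FiniteFamilies

/-- Henson's amalgamation distance: for tuples `x` in `E` and `y` in `F`, with
`r = sup { |‖∑ sᵢxᵢ‖ - ‖∑ sᵢyᵢ‖| : ∑ |sᵢ| = 1 }`, there are linear isometric embeddings
of `E` and `F` into a common normed space with `‖xᵢ - yᵢ‖ ≤ r` for all `i`, and `r` is
least with this property. -/
theorem henson_amalgamation_distance (E : Type u) (F : Type v)
    [NormedAddCommGroup E] [NormedSpace ℝ E] [NormedAddCommGroup F] [NormedSpace ℝ F]
    (k : ℕ) (hk : 1 ≤ k) (x : Fin k → E) (y : Fin k → F) (r : ℝ)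
    (hr : r = sSup {t : ℝ | ∃ s : Fin k → ℝ, (∑ i, |s i|) = 1 ∧
      t = |‖∑ i, s i • x i‖ - ‖∑ i, s i • y i‖|}) :
    (∃ (V : Type (max u v)) (_ : NormedAddCommGroup V) (_ : NormedSpace ℝ V)
      (f : E →ₗᵢ[ℝ] V) (g : F →ₗᵢ[ℝ] V), ∀ i, ‖f (x i) - g (y i)‖ ≤ r) ∧
    ∀ (W : Type w) (_ : NormedAddCommGroup W) (_ : NormedSpace ℝ W)
      (f' : E →ₗᵢ[ℝ] W) (g' : F →ₗᵢ[ℝ] W), ∃ i, r ≤ ‖f' (x i) - g' (y i)‖ := by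
  have hr0 : 0 ≤ r := hr ▸ Real.sSup_nonneg (by rintro _ ⟨s, -, rfl⟩; exact abs_nonneg _)
  have hbudget (s : Fin k → ℝ) :
      |‖Fintype.linearCombination ℝ x s‖ - ‖Fintype.linearCombination ℝ y s‖| ≤
        (r.toNNReal • l1Seminorm (Fin k)) s := by
    simpa [← hr, NNReal.smul_def, hr0, Fintype.linearCombination_apply] using
      abs_norm_sum_smul_sub_le_sSup_mul x y s
  refine ⟨?_, fun W _ _ f' g' => hr ▸ ?_⟩
  · obtain ⟨V, _, _, f, g, hfg⟩ := exists_linearIsometry_amalgam hbudget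
    refine ⟨V, _, _, f, g, fun i => ?_⟩
    simpa [NNReal.smul_def, hr0, Pi.single_apply, apply_ite] using hfg (Pi.single i 1)
  · have : Nonempty (Fin k) := ⟨⟨0, hk⟩⟩
    exact exists_sSup_abs_norm_sum_smul_sub_le f' g' x y
end

section
/- Let E and F be real Banach spaces and j : E → F a linear isometric embedding. Then the following are equivalent: (i) there exists a group homomorphism Θ from the group of all surjective (not necessarily linear) isometries of E to the group of all surjective isometries of F, continuous for the topologies of pointwise convergence, such that (Θφ)(j(a)) = j(φ(a)) for all isometries φ and all a ∈ E; (ii) there exists a group homomorphism Θ' from the group of surjective linear isometries of E to the group of surjective linear isometries of F, continuous for the topologies of pointwise convergence, such that (Θ'φ)(j(a)) = j(φ(a)) for all surjective linear isometries φ of E and all a ∈ E. -/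
/-- The topology of pointwise convergence on the group of surjective isometries of a
metric space. -/
def isoPtTop (X : Type*) [MetricSpace X] : TopologicalSpace (X ≃ᵢ X) :=
  TopologicalSpace.induced (fun φ : X ≃ᵢ X => (φ : X → X)) inferInstance

/-- The topology of pointwise convergence on the group of surjective linear isometries of
a normed space. -/
def linIsoPtTop (E : Type*) [NormedAddCommGroup E] [NormedSpace ℝ E] :
    TopologicalSpace (E ≃ₗᵢ[ℝ] E) :=
  TopologicalSpace.induced (fun φ : E ≃ₗᵢ[ℝ] E => (φ : E → E)) inferInstance

/-! By Mazur–Ulam every `φ ∈ Iso(E)` is `x ↦ L φ x + φ 0` with `L φ ∈ Iso_L(E)`, and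
`φ ↦ L φ` is a continuous homomorphism retracting `Iso(E)` onto `Iso_L(E)`. Hence a
`Θ` as in (i) gives `Θ' := L ∘ Θ` on `Iso_L(E)`, and conversely a `Θ'` as in (ii) gives
`Θ φ := Θ' (L φ) + j (φ 0)`: the cocycle identity `φ (ψ 0) = L φ (ψ 0) + φ 0` makes it
multiplicative because `Θ' (L φ)` extends `L φ` along `j`. -/

namespace IsometryEquiv

variable {E : Type*} [NormedAddCommGroup E] [NormedSpace ℝ E]

theorem apply_eq_toRealLinearIsometryEquiv_add (φ : E ≃ᵢ E) (x : E) :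
    φ x = φ.toRealLinearIsometryEquiv x + φ 0 := by
  simp

theorem toRealLinearIsometryEquiv_mul (φ ψ : E ≃ᵢ E) :
    (φ * ψ).toRealLinearIsometryEquiv =
      φ.toRealLinearIsometryEquiv * ψ.toRealLinearIsometryEquiv := by
  ext x
  simp only [toRealLinearIsometryEquiv_apply, mul_apply, LinearIsometryEquiv.coe_mul,
    Function.comp_apply, map_sub]
  abel

end IsometryEquiv

section PointwiseTopology

attribute [local instance] isoPtTop linIsoPtTop

theorem continuous_isoPtTop_iff {α X : Type*} [TopologicalSpace α] [MetricSpace X]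
    {f : α → X ≃ᵢ X} : Continuous f ↔ ∀ x, Continuous fun a => f a x :=
  continuous_induced_rng.trans continuous_pi_iff

theorem continuous_linIsoPtTop_iff {α E : Type*} [TopologicalSpace α] [NormedAddCommGroup E]
    [NormedSpace ℝ E] {f : α → E ≃ₗᵢ[ℝ] E} : Continuous f ↔ ∀ x, Continuous fun a => f a x :=
  continuous_induced_rng.trans continuous_pi_iff

theorem continuous_isoPtTop_apply {X : Type*} [MetricSpace X] (x : X) :
    Continuous fun φ : X ≃ᵢ X => φ x :=
  continuous_isoPtTop_iff.1 continuous_id x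

theorem continuous_linIsoPtTop_apply {E : Type*} [NormedAddCommGroup E] [NormedSpace ℝ E]
    (x : E) : Continuous fun φ : E ≃ₗᵢ[ℝ] E => φ x :=
  continuous_linIsoPtTop_iff.1 continuous_id x

variable {E : Type*} [NormedAddCommGroup E] [NormedSpace ℝ E]

theorem continuous_toIsometryEquiv :
    Continuous (LinearIsometryEquiv.toIsometryEquiv : (E ≃ₗᵢ[ℝ] E) → E ≃ᵢ E) :=
  continuous_isoPtTop_iff.2 continuous_linIsoPtTop_apply

theorem continuous_toRealLinearIsometryEquiv :
    Continuous (IsometryEquiv.toRealLinearIsometryEquiv : (E ≃ᵢ E) → E ≃ₗᵢ[ℝ] E) :=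
  continuous_linIsoPtTop_iff.2 fun x => by
    simp only [IsometryEquiv.toRealLinearIsometryEquiv_apply]
    exact (continuous_isoPtTop_apply x).sub (continuous_isoPtTop_apply 0)

variable {F : Type*} [NormedAddCommGroup F] [NormedSpace ℝ F]

noncomputable def linearRestriction (Θ : (E ≃ᵢ E) → (F ≃ᵢ F)) (φ : E ≃ₗᵢ[ℝ] E) : F ≃ₗᵢ[ℝ] F :=
  (Θ φ.toIsometryEquiv).toRealLinearIsometryEquiv

theorem linearRestriction_mul {Θ : (E ≃ᵢ E) → (F ≃ᵢ F)}
    (hΘ : ∀ φ ψ, Θ (φ * ψ) = Θ φ * Θ ψ) (φ ψ : E ≃ₗᵢ[ℝ] E) :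
    linearRestriction Θ (φ * ψ) = linearRestriction Θ φ * linearRestriction Θ ψ := by
  rw [linearRestriction, linearRestriction, linearRestriction,
    ← IsometryEquiv.toRealLinearIsometryEquiv_mul, ← hΘ]
  rfl

theorem continuous_linearRestriction {Θ : (E ≃ᵢ E) → (F ≃ᵢ F)} (hΘ : Continuous Θ) :
    Continuous (linearRestriction Θ) :=
  continuous_toRealLinearIsometryEquiv.comp (hΘ.comp continuous_toIsometryEquiv)

theorem linearRestriction_apply_map {j : E →ₗᵢ[ℝ] F} {Θ : (E ≃ᵢ E) → (F ≃ᵢ F)}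
    (hΘ : ∀ φ a, Θ φ (j a) = j (φ a)) (φ : E ≃ₗᵢ[ℝ] E) (a : E) :
    linearRestriction Θ φ (j a) = j (φ a) := by
  have h0 : Θ φ.toIsometryEquiv 0 = 0 := by simpa using hΘ φ.toIsometryEquiv 0
  simp [linearRestriction, hΘ, h0]

variable (j : E →ₗᵢ[ℝ] F)

noncomputable def affineExtension (Θ' : (E ≃ₗᵢ[ℝ] E) → (F ≃ₗᵢ[ℝ] F)) (φ : E ≃ᵢ E) : F ≃ᵢ F :=
  (Θ' φ.toRealLinearIsometryEquiv).toIsometryEquiv.trans (IsometryEquiv.addRight (j (φ 0)))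

theorem affineExtension_apply (Θ' : (E ≃ₗᵢ[ℝ] E) → (F ≃ₗᵢ[ℝ] F)) (φ : E ≃ᵢ E) (y : F) :
    affineExtension j Θ' φ y = Θ' φ.toRealLinearIsometryEquiv y + j (φ 0) :=
  rfl

variable {j}

theorem affineExtension_apply_map {Θ' : (E ≃ₗᵢ[ℝ] E) → (F ≃ₗᵢ[ℝ] F)}
    (hΘ' : ∀ φ a, Θ' φ (j a) = j (φ a)) (φ : E ≃ᵢ E) (a : E) :
    affineExtension j Θ' φ (j a) = j (φ a) := by
  rw [affineExtension_apply, hΘ', ← map_add, ← φ.apply_eq_toRealLinearIsometryEquiv_add]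

theorem affineExtension_mul {Θ' : (E ≃ₗᵢ[ℝ] E) → (F ≃ₗᵢ[ℝ] F)}
    (hmul : ∀ φ ψ, Θ' (φ * ψ) = Θ' φ * Θ' ψ) (hΘ' : ∀ φ a, Θ' φ (j a) = j (φ a))
    (φ ψ : E ≃ᵢ E) :
    affineExtension j Θ' (φ * ψ) = affineExtension j Θ' φ * affineExtension j Θ' ψ := by
  ext y
  simp only [IsometryEquiv.mul_apply, affineExtension_apply,
    IsometryEquiv.toRealLinearIsometryEquiv_mul, hmul, LinearIsometryEquiv.coe_mul,
    Function.comp_apply]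
  rw [map_add, hΘ', add_assoc, ← map_add j, ← φ.apply_eq_toRealLinearIsometryEquiv_add]

theorem continuous_affineExtension {Θ' : (E ≃ₗᵢ[ℝ] E) → (F ≃ₗᵢ[ℝ] F)} (hΘ' : Continuous Θ') :
    Continuous (affineExtension j Θ') :=
  continuous_isoPtTop_iff.2 fun y =>
    (((continuous_linIsoPtTop_apply y).comp hΘ').comp continuous_toRealLinearIsometryEquiv).add
      (j.continuous.comp (continuous_isoPtTop_apply 0))

end PointwiseTopology

theorem gEmbedding_iff_linear_gEmbedding_general (E F : Type*)
    [NormedAddCommGroup E] [NormedSpace ℝ E]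
    [NormedAddCommGroup F] [NormedSpace ℝ F]
    (j : E →ₗᵢ[ℝ] F) :
    (∃ Θ : (E ≃ᵢ E) → (F ≃ᵢ F),
      (∀ φ ψ : E ≃ᵢ E, Θ (φ * ψ) = Θ φ * Θ ψ) ∧
      @Continuous _ _ (isoPtTop E) (isoPtTop F) Θ ∧
      ∀ (φ : E ≃ᵢ E) (a : E), Θ φ (j a) = j (φ a)) ↔
    (∃ Θ' : (E ≃ₗᵢ[ℝ] E) → (F ≃ₗᵢ[ℝ] F),
      (∀ φ ψ : E ≃ₗᵢ[ℝ] E, Θ' (φ * ψ) = Θ' φ * Θ' ψ) ∧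
      @Continuous _ _ (linIsoPtTop E) (linIsoPtTop F) Θ' ∧
      ∀ (φ : E ≃ₗᵢ[ℝ] E) (a : E), Θ' φ (j a) = j (φ a)) := by
  constructor
  · rintro ⟨Θ, hmul, hcont, hext⟩
    exact ⟨linearRestriction Θ, linearRestriction_mul hmul, continuous_linearRestriction hcont,
      linearRestriction_apply_map hext⟩
  · rintro ⟨Θ', hmul, hcont, hext⟩
    exact ⟨affineExtension j Θ', affineExtension_mul hmul hext, continuous_affineExtension hcont,
      affineExtension_apply_map hext⟩

/-- For a linear isometric embedding `j : E → F` of real Banach spaces, being a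
`g`-embedding for the full isometry groups is equivalent to the analogous condition for
the linear isometry groups: a continuous group homomorphism `Θ : Iso(E) → Iso(F)` with
`Θ φ` extending `φ` (along `j`) exists iff a continuous group homomorphism
`Θ' : Iso_L(E) → Iso_L(F)` with `Θ' φ` extending `φ` exists. -/
theorem gEmbedding_iff_linear_gEmbedding (E F : Type*)
    [NormedAddCommGroup E] [NormedSpace ℝ E] [CompleteSpace E]
    [NormedAddCommGroup F] [NormedSpace ℝ F] [CompleteSpace F]
    (j : E →ₗᵢ[ℝ] F) :
    (∃ Θ : (E ≃ᵢ E) → (F ≃ᵢ F),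
      (∀ φ ψ : E ≃ᵢ E, Θ (φ * ψ) = Θ φ * Θ ψ) ∧
      @Continuous _ _ (isoPtTop E) (isoPtTop F) Θ ∧
      ∀ (φ : E ≃ᵢ E) (a : E), Θ φ (j a) = j (φ a)) ↔
    (∃ Θ' : (E ≃ₗᵢ[ℝ] E) → (F ≃ₗᵢ[ℝ] F),
      (∀ φ ψ : E ≃ₗᵢ[ℝ] E, Θ' (φ * ψ) = Θ' φ * Θ' ψ) ∧
      @Continuous _ _ (linIsoPtTop E) (linIsoPtTop F) Θ' ∧
      ∀ (φ : E ≃ₗᵢ[ℝ] E) (a : E), Θ' φ (j a) = j (φ a)) :=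
  gEmbedding_iff_linear_gEmbedding_general E F j
end

section
/- For every Polish group H there exist a separable real Banach space E and an injective group homomorphism Θ : H → Iso_L(E) into the group of surjective linear isometries of E, such that Θ is a homeomorphism onto its image when Iso_L(E) carries the topology of pointwise convergence. -/
/-!
Let `ρ` be a pseudometric inducing the right uniformity of `H` (the uniformity is countably
generated since `H` is first countable) and let `f y = min (ρ y 1) 1`. Since `f` is uniformly
continuous for the right uniformity, the left regular representation `(g • φ) y = φ (g⁻¹ y)` on
bounded continuous functions moves `f` continuously, and as `f` is small only near `1`, its orbit
map `g ↦ g • f` is a topological embedding. On the closed linear span `E` of this orbit, which is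
separable, every orbit is continuous by density and the isometry of each `g • ·`; and the
pointwise topology is already recovered from the single vector `f`, so `H` embeds into `Iso_L(E)`.
-/

universe u

open Filter Topology Set Uniformity BoundedContinuousFunction

section CyclicSubrepresentation

variable {G F : Type*} [Group G] [NormedAddCommGroup F] [NormedSpace ℝ F]
  (π : G →* (F ≃ₗᵢ[ℝ] F)) (v : F)

def cyclicSubspace : Submodule ℝ F :=
  (Submodule.span ℝ (range fun g => π g v)).topologicalClosure

theorem apply_mem_cyclicSubspace (g : G) {w : F} (hw : w ∈ cyclicSubspace π v) :
    π g w ∈ cyclicSubspace π v := by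
  have hspan : Submodule.span ℝ (range fun h => π h v) ≤
      (cyclicSubspace π v).comap (π g : F →ₗ[ℝ] F) := by
    rw [Submodule.span_le]
    rintro _ ⟨h, rfl⟩
    change π g (π h v) ∈ cyclicSubspace π v
    rw [show π g (π h v) = π (g * h) v by simp]
    exact Submodule.le_topologicalClosure _ (Submodule.subset_span ⟨g * h, rfl⟩)
  have hclosed : IsClosed ((cyclicSubspace π v).comap (π g : F →ₗ[ℝ] F) : Set F) :=
    (Submodule.isClosed_topologicalClosure _).preimage (π g).continuous
  exact Submodule.topologicalClosure_minimal _ hspan hclosed hw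

theorem map_cyclicSubspace (g : G) :
    (cyclicSubspace π v).map (π g : F →ₗ[ℝ] F) = cyclicSubspace π v := by
  refine le_antisymm
    (Submodule.map_le_iff_le_comap.2 fun w hw => apply_mem_cyclicSubspace π v g hw)
    fun w hw => ⟨π g⁻¹ w, apply_mem_cyclicSubspace π v g⁻¹ hw, ?_⟩
  simp

noncomputable def cyclicSubrep : G →* (cyclicSubspace π v ≃ₗᵢ[ℝ] cyclicSubspace π v) where
  toFun g :=
    ((π g).submoduleMap _).trans (LinearIsometryEquiv.ofEq _ _ (map_cyclicSubspace π v g))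
  map_one' := by ext; simp
  map_mul' g h := by ext; simp

instance [CompleteSpace F] : CompleteSpace (cyclicSubspace π v) :=
  (Submodule.isClosed_topologicalClosure _).completeSpace_coe

variable [TopologicalSpace G]

theorem isClosed_setOf_continuous_orbit : IsClosed {w : F | Continuous fun g => π g w} := by
  refine isClosed_of_closure_subset fun w hw => continuous_of_uniform_approx_of_continuous ?_
  intro u hu
  obtain ⟨ε, hε, hεu⟩ := Metric.mem_uniformity_dist.1 hu
  obtain ⟨w', hw', hww'⟩ := Metric.mem_closure_iff.1 hw ε hε
  exact ⟨fun g => π g w', hw', fun g => hεu (by rwa [LinearIsometryEquiv.dist_map])⟩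

variable {π v}

theorem separableSpace_cyclicSubspace [TopologicalSpace.SeparableSpace G]
    (hv : Continuous fun g => π g v) : TopologicalSpace.SeparableSpace (cyclicSubspace π v) := by
  have h := (TopologicalSpace.isSeparable_range hv).span (R := ℝ) |>.closure
  rw [← Submodule.topologicalClosure_coe] at h
  exact h.separableSpace

variable [ContinuousMul G]

theorem continuous_orbit_of_mem_cyclicSubspace (hv : Continuous fun g => π g v) {w : F}
    (hw : w ∈ cyclicSubspace π v) : Continuous fun g => π g w := by
  let S : Submodule ℝ F :=
    { carrier := {w | Continuous fun g => π g w}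
      add_mem' := fun h₁ h₂ => by simp only [mem_ofPred_eq, map_add]; exact h₁.add h₂
      zero_mem' := by simp only [mem_ofPred_eq, map_zero]; exact continuous_const
      smul_mem' := fun c _ h => by simp only [mem_ofPred_eq, map_smul]; exact h.const_smul c }
  have horbit : range (fun h => π h v) ⊆ S := by
    rintro _ ⟨h, rfl⟩
    have : (fun g => π g (π h v)) = fun g => π (g * h) v := by ext; simp
    change Continuous fun g => π g (π h v)
    rw [this]
    exact hv.comp (continuous_mul_const h)
  exact Submodule.topologicalClosure_minimal _ (Submodule.span_le.2 horbit)
    (isClosed_setOf_continuous_orbit π) hw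

theorem isEmbedding_cyclicSubrep [T0Space G] (hv : IsInducing fun g => π g v) :
    @IsEmbedding _ _ _ (linIsoPtTop (cyclicSubspace π v)) (cyclicSubrep π v) := by
  let v' : cyclicSubspace π v :=
    ⟨v, Submodule.le_topologicalClosure _ (Submodule.subset_span ⟨1, by simp⟩)⟩
  have hcont : Continuous fun g => ⇑(cyclicSubrep π v g) :=
    continuous_pi fun w => (continuous_orbit_of_mem_cyclicSubspace hv.continuous w.2).subtype_mk _
  have heval : Continuous fun Φ : cyclicSubspace π v → cyclicSubspace π v => (Φ v' : F) :=
    continuous_subtype_val.comp (continuous_apply v')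
  have hind : IsInducing fun g => ⇑(cyclicSubrep π v g) :=
    IsInducing.of_comp hcont heval hv
  let _ := linIsoPtTop (cyclicSubspace π v)
  exact ((IsInducing.induced _).of_comp_iff.1 hind).isEmbedding

end CyclicSubrepresentation

namespace BoundedContinuousFunction

variable {X Y 𝕜 β : Type*} [TopologicalSpace X] [TopologicalSpace Y] [NormedField 𝕜]
  [SeminormedAddCommGroup β] [NormedSpace 𝕜 β]

variable (𝕜 β) in
noncomputable def compHomeomorphₗᵢ (e : X ≃ₜ Y) : (Y →ᵇ β) ≃ₗᵢ[𝕜] (X →ᵇ β) where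
  toFun f := f.compContinuous (e : C(X, Y))
  invFun f := f.compContinuous (e.symm : C(Y, X))
  map_add' _ _ := rfl
  map_smul' _ _ := rfl
  left_inv f := by ext; simp
  right_inv f := by ext; simp
  norm_map' f := by
    refine le_antisymm (norm_compContinuous_le f _) ?_
    have hf : (f.compContinuous (e : C(X, Y))).compContinuous (e.symm : C(Y, X)) = f := by
      ext; simp
    calc ‖f‖ = ‖(f.compContinuous (e : C(X, Y))).compContinuous (e.symm : C(Y, X))‖ := by
          rw [hf]
      _ ≤ _ := norm_compContinuous_le _ _

@[simp]
theorem compHomeomorphₗᵢ_apply (e : X ≃ₜ Y) (f : Y →ᵇ β) (x : X) :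
    compHomeomorphₗᵢ 𝕜 β e f x = f (e x) := rfl

end BoundedContinuousFunction

section LeftRegular

variable (H : Type*) [TopologicalSpace H] [Group H] [ContinuousMul H]

noncomputable def leftRegular : H →* ((H →ᵇ ℝ) ≃ₗᵢ[ℝ] (H →ᵇ ℝ)) where
  toFun g := compHomeomorphₗᵢ ℝ ℝ (Homeomorph.mulLeft g⁻¹)
  map_one' := by ext; simp
  map_mul' g h := by ext; simp [mul_assoc]

variable {H}

@[simp]
theorem leftRegular_apply (g : H) (f : H →ᵇ ℝ) (y : H) : leftRegular H g f y = f (g⁻¹ * y) := rfl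

theorem continuous_orbit_leftRegular {H : Type*} [UniformSpace H] [Group H]
    [IsRightUniformGroup H] {f : H →ᵇ ℝ} (hf : UniformContinuous f) :
    Continuous fun g => leftRegular H g f := by
  refine continuous_iff_continuousAt.2 fun h => Metric.tendsto_nhds.2 fun ε hε => ?_
  have hunif : {p : H × H | dist (f p.1) (f p.2) < ε / 2} ∈ 𝓤 H :=
    hf (Metric.dist_mem_uniformity (half_pos hε))
  rw [uniformity_eq_comap_mul_inv_nhds_one] at hunif
  obtain ⟨V, hV, hVsub⟩ := mem_comap.1 hunif
  have hnear : ∀ᶠ g in 𝓝 h, h⁻¹ * g ∈ V :=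
    (continuous_const.mul continuous_id).continuousAt.preimage_mem_nhds (by simpa using hV)
  filter_upwards [hnear] with g hg
  refine lt_of_le_of_lt ((dist_le (half_pos hε).le).2 fun y => ?_) (half_lt_self hε)
  have hpair : (h⁻¹ * y) * (g⁻¹ * y)⁻¹ = h⁻¹ * g := by group
  exact (hVsub (show (g⁻¹ * y, h⁻¹ * y) ∈ _ by simpa [hpair] using hg)).le

theorem isInducing_orbit_leftRegular {H : Type*} [TopologicalSpace H] [Group H]
    [IsTopologicalGroup H] {f : H →ᵇ ℝ} (hcont : Continuous fun g => leftRegular H g f)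
    (hf : comap f (𝓝 (f 1)) ≤ 𝓝 1) : IsInducing fun g => leftRegular H g f := by
  refine isInducing_iff_nhds.2 fun a => le_antisymm (hcont.tendsto a).le_comap ?_
  let φ : H ≃ₜ H := (Homeomorph.inv H).trans (Homeomorph.mulRight a)
  -- evaluating the orbit at `a` gives `f ∘ φ`, and `φ a = 1`
  calc comap (fun g => leftRegular H g f) (𝓝 (leftRegular H a f))
      ≤ comap (fun g => leftRegular H g f)
          (comap (fun F : H →ᵇ ℝ => F a) (𝓝 (leftRegular H a f a))) :=
        comap_mono ((continuous_eval_const a).tendsto (leftRegular H a f)).le_comap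
    _ = comap φ (comap f (𝓝 (f 1))) := by
        simp only [comap_comap, leftRegular_apply, inv_mul_cancel]; rfl
    _ ≤ comap φ (𝓝 1) := comap_mono hf
    _ = 𝓝 a := by rw [φ.comap_nhds_eq]; simp [φ, Homeomorph.mulRight_symm]

end LeftRegular

theorem exists_isInducing_orbit_leftRegular_of_pseudoMetricSpace {H : Type*}
    [PseudoMetricSpace H] [Group H] [IsRightUniformGroup H] :
    ∃ f : H →ᵇ ℝ, IsInducing fun g => leftRegular H g f := by
  have hlip : LipschitzWith 1 fun y : H => min (dist y 1) 1 :=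
    (LipschitzWith.dist_left 1).min_const 1
  have hmem : ∀ y : H, min (dist y 1) 1 ∈ Icc (0 : ℝ) 1 :=
    fun y => ⟨le_min dist_nonneg zero_le_one, min_le_right _ _⟩
  let f : H →ᵇ ℝ := mkOfBound ⟨_, hlip.continuous⟩ 1 fun x y =>
    Real.dist_le_of_mem_Icc_01 (hmem x) (hmem y)
  refine ⟨f, isInducing_orbit_leftRegular (continuous_orbit_leftRegular hlip.uniformContinuous) ?_⟩
  intro U hU
  obtain ⟨ε, hε, hball⟩ := Metric.mem_nhds_iff.1 hU
  refine mem_comap.2 ⟨Metric.ball (f 1) (min ε 1), Metric.ball_mem_nhds _ (lt_min hε one_pos),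
    fun x hx => hball ?_⟩
  have hx' : min (dist x 1) 1 < min ε 1 := by
    simpa [f, Real.dist_eq, abs_of_nonneg (hmem x).1] using hx
  rw [Metric.mem_ball]
  by_contra! h
  exact (min_le_min_right 1 h).not_gt hx'

theorem exists_isInducing_orbit_leftRegular (H : Type*) [TopologicalSpace H] [Group H]
    [IsTopologicalGroup H] [FirstCountableTopology H] :
    ∃ f : H →ᵇ ℝ, IsInducing fun g => leftRegular H g f := by
  let := IsTopologicalGroup.rightUniformSpace H
  have : IsRightUniformGroup H := { uniformity_eq := rfl }
  have : (𝓤 H).IsCountablyGenerated := by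
    rw [uniformity_eq_comap_mul_inv_nhds_one]; infer_instance
  -- its uniformity is definitionally the right uniformity, so `IsRightUniformGroup H` still applies
  let := UniformSpace.pseudoMetricSpace H
  exact exists_isInducing_orbit_leftRegular_of_pseudoMetricSpace

/-- Teleman's theorem: every Polish group embeds homeomorphically, via an injective
group homomorphism, into the group of surjective linear isometries of some separable real
Banach space, with the topology of pointwise convergence. -/
theorem teleman_polish_group_embeds (H : Type u) [TopologicalSpace H] [Group H]
    [IsTopologicalGroup H] [PolishSpace H] :
    ∃ (E : Type u) (_ : NormedAddCommGroup E) (_ : NormedSpace ℝ E) (_ : CompleteSpace E),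
      TopologicalSpace.SeparableSpace E ∧
      ∃ Θ : H → (E ≃ₗᵢ[ℝ] E),
        Function.Injective Θ ∧
        (∀ g h : H, Θ (g * h) = Θ g * Θ h) ∧
        @Topology.IsEmbedding _ _ _ (linIsoPtTop E) Θ := by
  obtain ⟨f, hf⟩ := exists_isInducing_orbit_leftRegular H
  have hΘ := isEmbedding_cyclicSubrep hf
  exact ⟨cyclicSubspace (leftRegular H) f, inferInstance, inferInstance, inferInstance,
    separableSpace_cyclicSubspace hf.continuous, cyclicSubrep (leftRegular H) f,
    @IsEmbedding.injective _ _ _ (linIsoPtTop _) _ hΘ, map_mul _, hΘ⟩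
end
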